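/- arXiv:1208.5607 — 7 statements merged into one kernel-verified Lean document; each statement's English description precedes it below -/
import Mathlib

section
/- Let x1, ..., xn be distinct elements of a field and let 0 ≤ c ≤ n. Then the Schur polynomial for the rectangular partition with c parts equal to k satisfies S_{(k^c)}(x1,...,xn) = Σ_{τ ⊆ {1,...,n}, |τ| = c} (Π_{i ∈ τ} x_i^k) · Π_{i ∈ τ, j ∉ τ} x_i/(x_i - x_j), for every k ≥ 0. -/
/-!
After reversing the columns of both alternants (same sign on top and bottom) the denominator is
the Vandermonde determinant, and with `n = m + c` row `i` of the numerator is `x_i ^ j` in the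
first `m` columns plus `x_i ^ (j + k)` in the last `c` columns. Expanding multilinearly in the
rows gives one determinant for each set `S` of rows taking the second part; by pigeonhole only
`#S = c` survives. For such `S`, replacing the last `c` Vandermonde columns `x ^ j` by
`x ^ (j - m) * p x` with `p = ∏_{l ∉ S} (X - x_l)` does not change the determinant, and now both
matrices vanish on the rows outside `S` in the last `c` columns. Their determinants then only see
the two diagonal blocks, which differ by the row factors `x_i ^ (m + k) / p (x_i)`, `i ∈ S`.
-/

/-- The Schur polynomial of a partition `lam` (with at most `n` parts) in `n` variables,
defined as the ratio of alternants
`det(x_i^{lam_j + n - j}) / det(x_i^{n - j})` (indices written 0-based),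
valid when the `x_i` are distinct. -/
noncomputable def schurAlt (n : ℕ) (lam : Fin n → ℕ) {F : Type*} [Field F]
    (x : Fin n → F) : F :=
  (Matrix.of fun i j : Fin n => x i ^ (lam j + (n - 1 - (j : ℕ)))).det /
    (Matrix.of fun i j : Fin n => x i ^ (n - 1 - (j : ℕ))).det

open Finset Matrix Polynomial

namespace Equiv.Perm

variable {ι : Type*} [DecidableEq ι] (σ : Equiv.Perm ι) {S T : Finset ι}

lemma exists_mem_apply_notMem_of_card_lt (h : #S < #T) : ∃ j ∈ T, σ j ∉ S := by
  by_contra! hmaps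
  exact (card_le_card_of_injOn σ hmaps σ.injective.injOn).not_gt h

lemma apply_notMem_of_mapsTo (h : #S ≤ #T) (hmaps : ∀ j ∈ T, σ j ∈ S) {j : ι} (hj : j ∉ T) :
    σ j ∉ S := by
  have himage : T.image σ = S :=
    eq_of_subset_of_card_le (image_subset_iff.mpr hmaps)
      (h.trans (card_image_of_injective T σ.injective).ge)
  rw [← himage, mem_image]
  rintro ⟨j', hj', hσ⟩
  exact hj (σ.injective hσ ▸ hj')

end Equiv.Perm

namespace Matrix

variable {ι R : Type*} [Fintype ι] [DecidableEq ι] [CommRing R]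

lemma det_eq_zero_of_cols_supported (M : Matrix ι ι R) {S T : Finset ι} (h : #S < #T)
    (hM : ∀ i ∉ S, ∀ j ∈ T, M i j = 0) : M.det = 0 := by
  refine (det_apply' M).trans (sum_eq_zero fun σ _ => ?_)
  obtain ⟨j, hjT, hj⟩ := σ.exists_mem_apply_notMem_of_card_lt h
  rw [prod_eq_zero (f := fun i => M (σ i) i) (mem_univ j) (hM _ hj j hjT), mul_zero]

lemma det_eq_zero_of_rows_supported (M : Matrix ι ι R) {S T : Finset ι} (h : #S ≠ #T)
    (hS : ∀ i ∈ S, ∀ j ∉ T, M i j = 0) (hSc : ∀ i ∉ S, ∀ j ∈ T, M i j = 0) : M.det = 0 := by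
  rcases h.lt_or_gt with h | h
  · exact M.det_eq_zero_of_cols_supported h hSc
  · refine M.det_eq_zero_of_cols_supported (S := Sᶜ) (T := Tᶜ) ?_ fun i hi j hj => ?_
    · simpa [card_compl] using Nat.sub_lt_sub_left (card_le_univ S |>.trans_lt' h) h
    · exact hS i (by simpa using hi) j (by simpa using hj)

/-- A permutation contributing to `det M` maps `T` onto `S`, hence never meets `S × Tᶜ`. -/
lemma det_eq_of_eq_off_block (M N : Matrix ι ι R) {S T : Finset ι} (h : #S ≤ #T)
    (hM : ∀ i ∉ S, ∀ j ∈ T, M i j = 0) (hMN : ∀ i j, (i ∈ S → j ∈ T) → M i j = N i j) :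
    M.det = N.det := by
  rw [det_apply', det_apply']
  refine sum_congr rfl fun σ _ => ?_
  by_cases hout : ∃ j ∈ T, σ j ∉ S
  · obtain ⟨j, hjT, hj⟩ := hout
    have hN : N (σ j) j = 0 := (hMN _ _ fun h => absurd h hj).symm.trans (hM _ hj j hjT)
    rw [prod_eq_zero (f := fun i => M (σ i) i) (mem_univ j) (hM _ hj j hjT),
      prod_eq_zero (f := fun i => N (σ i) i) (mem_univ j) hN]
  · have hmaps : ∀ j ∈ T, σ j ∈ S := by simpa using hout
    congr 1
    refine prod_congr rfl fun j _ => hMN (σ j) j fun hσj => ?_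
    by_contra hj
    exact σ.apply_notMem_of_mapsTo h hmaps hj hσj

lemma det_vandermonde_eq_det_mul_eval_monic [Nontrivial R] {n m : ℕ} (x : Fin n → R)
    {p : R[X]} (hp : p.Monic) (hdeg : p.natDegree = m) :
    (vandermonde x).det = (of fun i j : Fin n =>
      if (j : ℕ) < m then x i ^ (j : ℕ) else x i ^ ((j : ℕ) - m) * p.eval (x i)).det := by
  let P : Fin n → R[X] := fun j => if (j : ℕ) < m then X ^ (j : ℕ) else X ^ ((j : ℕ) - m) * p
  have hPdeg : ∀ j, (P j).natDegree = j := fun j => by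
    by_cases hj : (j : ℕ) < m
    · simp [P, hj]
    · simp only [P, hj, if_false, (monic_X_pow _).natDegree_mul hp, natDegree_X_pow, hdeg]
      lia
  have hPmonic : ∀ j, (P j).Monic := fun j => by
    by_cases hj : (j : ℕ) < m
    · simp [P, hj, monic_X_pow]
    · simpa [P, hj] using (monic_X_pow _).mul hp
  rw [det_eval_matrixOfPolynomials_eq_det_vandermonde x P hPdeg hPmonic]
  congr 1
  ext i j
  by_cases hj : (j : ℕ) < m <;> simp [P, hj]

end Matrix

section Rectangular

variable {R : Type*} [CommRing R] {m c : ℕ}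

/-- The term indexed by `S` of the row-multilinear expansion of the column-reversed rectangular
alternant. -/
def splitAlternant (x : Fin (m + c) → R) (k : ℕ) (S : Finset (Fin (m + c))) :
    Matrix (Fin (m + c)) (Fin (m + c)) R :=
  of fun i j => if i ∈ S then (if m ≤ (j : ℕ) then x i ^ ((j : ℕ) + k) else 0)
    else (if (j : ℕ) < m then x i ^ (j : ℕ) else 0)

lemma Fin.card_filter_le_val : #{j : Fin (m + c) | m ≤ (j : ℕ)} = c := by
  have hlt := Fin.card_filter_val_lt (n := m + c) (m := m)
  have hsum := card_filter_add_card_filter_not (s := univ) fun j : Fin (m + c) => (j : ℕ) < m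
  simp only [not_lt, card_univ, Fintype.card_fin] at hsum
  omega

lemma det_splitAlternant_eq_zero (x : Fin (m + c) → R) (k : ℕ) {S : Finset (Fin (m + c))}
    (hS : #S ≠ c) : (splitAlternant x k S).det = 0 := by
  refine det_eq_zero_of_rows_supported _ (S := S) (T := {j | m ≤ (j : ℕ)})
    (by rwa [Fin.card_filter_le_val]) (fun i hi j hj => ?_) (fun i hi j hj => ?_)
  · simp only [mem_filter, mem_univ, true_and] at hj
    simp [splitAlternant, hi, hj]
  · simp only [mem_filter, mem_univ, true_and] at hj
    simp [splitAlternant, hi, hj.not_gt]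

lemma prod_sub_mul_det_splitAlternant [Nontrivial R] (x : Fin (m + c) → R) (k : ℕ)
    {S : Finset (Fin (m + c))} (hS : #S = c) :
    (∏ i ∈ S, ∏ j ∈ Sᶜ, (x i - x j)) * (splitAlternant x k S).det =
      (∏ i ∈ S, x i ^ (m + k)) * (vandermonde x).det := by
  set p : R[X] := ∏ l ∈ Sᶜ, (X - C (x l))
  have hp : p.Monic := monic_prod_of_monic _ _ fun l _ => monic_X_sub_C (x l)
  have hdeg : p.natDegree = m := by simp [p, card_compl, hS]
  have heval : ∀ i, p.eval (x i) = ∏ j ∈ Sᶜ, (x i - x j) := fun i => by simp [p, eval_prod]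
  simp only [← heval]
  rw [det_vandermonde_eq_det_mul_eval_monic x hp hdeg,
    ← Fintype.prod_ite_mem S fun i => p.eval (x i),
    ← Fintype.prod_ite_mem S fun i => x i ^ (m + k),
    ← det_mul_column, ← det_mul_column]
  refine det_eq_of_eq_off_block _ _ (S := S) (T := {j | m ≤ (j : ℕ)})
    (by rw [Fin.card_filter_le_val, hS]) (fun i hi j hj => ?_) (fun i j hij => ?_)
  · simp only [mem_filter, mem_univ, true_and] at hj
    simp [splitAlternant, hi, hj.not_gt]
  · by_cases hi : i ∈ S
    · have hj : m ≤ (j : ℕ) := by simpa using hij hi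
      simp only [splitAlternant, of_apply, hi, if_true, hj, hj.not_gt, if_false]
      rw [show (j : ℕ) + k = (m + k) + ((j : ℕ) - m) by omega, pow_add]
      ring
    · have hpi : p.eval (x i) = 0 := by
        rw [heval]
        exact prod_eq_zero (mem_compl.mpr hi) (sub_self _)
      by_cases hj : (j : ℕ) < m <;> simp [splitAlternant, hi, hj, hpi]

lemma det_rectangularAlternant_eq_sum (x : Fin (m + c) → R) (k : ℕ) :
    (of fun i j : Fin (m + c) => x i ^ ((if m ≤ (j : ℕ) then k else 0) + (j : ℕ))).det =
      ∑ S ∈ powersetCard c univ, (splitAlternant x k S).det := by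
  let A : Fin (m + c) → Fin (m + c) → R := fun i j =>
    if m ≤ (j : ℕ) then x i ^ ((j : ℕ) + k) else 0
  let B : Fin (m + c) → Fin (m + c) → R := fun i j =>
    if (j : ℕ) < m then x i ^ (j : ℕ) else 0
  have hsplit : (of fun i j : Fin (m + c) => x i ^ ((if m ≤ (j : ℕ) then k else 0) + (j : ℕ))) =
      of (A + B) := by
    ext i j
    by_cases hj : m ≤ (j : ℕ) <;> simp [A, B, hj, add_comm]
  have hpiece : ∀ S, of (S.piecewise A B) = splitAlternant x k S := fun S => by
    ext i j
    by_cases hi : i ∈ S <;> simp [splitAlternant, A, B, hi]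
  have hexpand : (of (A + B)).det = ∑ S : Finset (Fin (m + c)), (of (S.piecewise A B)).det :=
    detRowAlternating.toMultilinearMap.map_add_univ A B
  rw [hsplit, hexpand, ← sum_subset (subset_univ (powersetCard c univ)) fun S _ hS => ?_]
  · simp_rw [hpiece]
  · rw [hpiece]
    exact det_splitAlternant_eq_zero x k (by simpa using hS)

end Rectangular

lemma schurAlt_eq_div_det_vandermonde {F : Type*} [Field F] (n : ℕ) (lam : Fin n → ℕ)
    (x : Fin n → F) :
    schurAlt n lam x =
      (of fun i j : Fin n => x i ^ (lam (Fin.rev j) + (j : ℕ))).det / (vandermonde x).det := by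
  have hsign : ((Equiv.Perm.sign (Fin.revPerm : Equiv.Perm (Fin n)) : ℤ) : F) ≠ 0 := by
    rcases Int.units_eq_one_or (Equiv.Perm.sign (Fin.revPerm : Equiv.Perm (Fin n))) with h | h <;>
      simp [h]
  rw [schurAlt, ← mul_div_mul_left _ _ hsign, ← det_permute', ← det_permute']
  congr 2 <;> ext i j <;> simp only [submatrix_apply, of_apply, vandermonde_apply, id,
    Fin.revPerm_apply, Fin.val_rev] <;> congr 1 <;> omega

lemma prod_pow_mul_prod_div_sub {F : Type*} [Field F] {ι : Type*} [Fintype ι] [DecidableEq ι]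
    (x : ι → F) (k : ℕ) (S : Finset ι) :
    (∏ i ∈ S, x i ^ k) * ∏ i ∈ S, ∏ j ∈ univ \ S, x i / (x i - x j) =
      (∏ i ∈ S, x i ^ (#Sᶜ + k)) / ∏ i ∈ S, ∏ j ∈ Sᶜ, (x i - x j) := by
  simp only [prod_div_distrib, prod_const, ← compl_eq_univ_sdiff, pow_add, prod_mul_distrib]
  ring

/-- Modified Widom formula: for distinct `x_1, ..., x_n` and `0 ≤ c ≤ n`, the Schur
polynomial of the rectangular partition with `c` parts equal to `k` satisfies
`S_{(k^c)}(x) = Σ_{|τ| = c} (Π_{i∈τ} x_i^k) Π_{i∈τ, j∉τ} x_i/(x_i - x_j)`. -/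
theorem schur_rectangular_widom {F : Type*} [Field F] (n c : ℕ) (hc : c ≤ n)
    (x : Fin n → F) (hx : Function.Injective x) (k : ℕ) :
    schurAlt n (fun j => if (j : ℕ) < c then k else 0) x =
      ∑ τ ∈ Finset.powersetCard c (Finset.univ : Finset (Fin n)),
        (∏ i ∈ τ, x i ^ k) * ∏ i ∈ τ, ∏ j ∈ Finset.univ \ τ, x i / (x i - x j) := by
  obtain ⟨m, rfl⟩ : ∃ m, n = m + c := ⟨n - c, by omega⟩
  have hlam : ∀ j : Fin (m + c), (if (Fin.rev j : ℕ) < c then k else 0) =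
      if m ≤ (j : ℕ) then k else 0 := fun j => by
    have := j.isLt
    simp only [Fin.val_rev]
    split_ifs <;> omega
  have hV : (vandermonde x).det ≠ 0 := det_vandermonde_ne_zero_iff.mpr hx
  simp only [schurAlt_eq_div_det_vandermonde, hlam, det_rectangularAlternant_eq_sum, sum_div]
  refine sum_congr rfl fun S hS => ?_
  rw [mem_powersetCard_univ] at hS
  have hSc : #Sᶜ = m := by simp [card_compl, hS]
  have hdiff : ∏ i ∈ S, ∏ j ∈ Sᶜ, (x i - x j) ≠ 0 :=
    prod_ne_zero_iff.mpr fun i hi => prod_ne_zero_iff.mpr fun j hj =>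
      sub_ne_zero.mpr (hx.ne fun h => mem_compl.mp hj (h ▸ hi))
  rw [prod_pow_mul_prod_div_sub, hSc, div_eq_div_iff hV hdiff]
  linear_combination prod_sub_mul_det_splitAlternant x k hS
end

section
/- Insertion of an increasing sequence into a semistandard Young tableau yields a semistandard Young tableau: let T be a semistandard Young tableau and t_1 < t_2 < ... < t_c a strictly increasing sequence of positive integers. Insert each t_i into row i of T at the unique position keeping that row weakly increasing (creating a new one-box row if row i does not exist). Then the resulting filling is again a semistandard Young tableau (rows weakly increasing, columns strictly increasing, shape is a Young diagram). -/
/-- The position at which a value `v` is inserted into row `i` of the semistandard Young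
tableau `T`: the number of entries of that row which are `≤ v`.  Inserting `v` at this
position is the unique way of keeping the row weakly increasing. -/
def insertPos {μ : YoungDiagram} (T : SemistandardYoungTableau μ) (i v : ℕ) : ℕ :=
  ((Finset.range (μ.rowLen i)).filter (fun j => T.entry i j ≤ v)).card

/-- The entries obtained from the tableau `T` by sequence insertion of the strictly
increasing sequence `t 0 < t 1 < ⋯ < t (c-1)`: each `t i` is inserted into row `i`
at the unique position keeping that row weakly increasing (a new one-box row is
created when row `i` is empty). -/
def insertedEntry {μ : YoungDiagram} (T : SemistandardYoungTableau μ) {c : ℕ}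
    (t : Fin c → ℕ) (i j : ℕ) : ℕ :=
  if h : i < c then
    if j < insertPos T i (t ⟨i, h⟩) then T.entry i j
    else if j = insertPos T i (t ⟨i, h⟩) then t ⟨i, h⟩
    else T.entry i (j - 1)
  else T.entry i j

/-!
Row `i` of the new tableau is squeezed by the old row: its entry in column `j` is at most the old
entry there, and its entry in column `j + 1` is at least the old entry in column `j`; this gives
the rows. For the columns compare rows `i` and `i + 1` in column `j`. Left of the insertion point
of row `i + 1` the lower entry is unchanged and the upper one can only have decreased. From that
point on the lower entry is at least `t (i + 1) > t i`, which bounds row `i` up to its own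
insertion point; beyond it the upper entry is the old one from column `j - 1`, smaller than the
old lower entry there, which in turn is at most the new lower entry.
-/

namespace YoungDiagram

/-- The Young diagram whose rows have lengths `f 0, …, f (n - 1)`. -/
def ofAntitone (f : ℕ → ℕ) (hf : Antitone f) (n : ℕ) : YoungDiagram where
  cells := (Finset.range n ×ˢ Finset.range (f 0)).filter fun x => x.2 < f x.1
  isLowerSet := by
    rintro ⟨i₂, j₂⟩ ⟨i₁, j₁⟩ ⟨hi : i₁ ≤ i₂, hj : j₁ ≤ j₂⟩ h
    simp only [Finset.coe_filter, Finset.mem_product, Finset.mem_range, Set.mem_ofPred_eq] at h ⊢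
    have := hf hi
    have := hf (Nat.zero_le i₁)
    omega

variable {f : ℕ → ℕ} {hf : Antitone f} {n : ℕ}

theorem mem_ofAntitone {i j : ℕ} : (i, j) ∈ ofAntitone f hf n ↔ i < n ∧ j < f i := by
  have := hf (Nat.zero_le i)
  simp only [ofAntitone, ← mem_cells, Finset.mem_filter, Finset.mem_product, Finset.mem_range]
  omega

theorem rowLen_ofAntitone (hn : f n = 0) (i : ℕ) : (ofAntitone f hf n).rowLen i = f i := by
  refine eq_of_forall_lt_iff fun j => ?_
  rw [← mem_iff_lt_rowLen, mem_ofAntitone, and_iff_right_iff_imp]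
  intro hj
  by_contra! h
  have := hf h
  omega

theorem col_strict_of_succ {μ : YoungDiagram} {e : ℕ → ℕ → ℕ}
    (h : ∀ i j, (i + 1, j) ∈ μ → e i j < e (i + 1) j) {i₁ i₂ j : ℕ} (hi : i₁ < i₂)
    (hcell : (i₂, j) ∈ μ) : e i₁ j < e i₂ j := by
  induction i₂, hi using Nat.le_induction with
  | base => exact h i₁ j hcell
  | succ k hk ih => exact (ih (μ.up_left_mem k.le_succ le_rfl hcell)).trans (h k j hcell)

end YoungDiagram

def insertedShape (μ : YoungDiagram) (c : ℕ) : YoungDiagram :=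
  YoungDiagram.ofAntitone (fun i => μ.rowLen i + if i < c then 1 else 0)
    (fun i₁ i₂ hi => add_le_add (μ.rowLen_anti i₁ i₂ hi) (by split_ifs <;> omega))
    (μ.colLen 0 + c)

theorem rowLen_insertedShape (μ : YoungDiagram) (c i : ℕ) :
    (insertedShape μ c).rowLen i = μ.rowLen i + if i < c then 1 else 0 := by
  refine YoungDiagram.rowLen_ofAntitone ?_ i
  have : (μ.colLen 0 + c, 0) ∉ μ := by
    rw [YoungDiagram.mem_iff_lt_colLen]
    omega
  rw [YoungDiagram.mem_iff_lt_rowLen] at this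
  simp only [if_neg (Nat.not_lt.2 (Nat.le_add_left c _))]
  omega

theorem mem_insertedShape {μ : YoungDiagram} {c i j : ℕ} :
    (i, j) ∈ insertedShape μ c ↔ j < μ.rowLen i + if i < c then 1 else 0 := by
  rw [YoungDiagram.mem_iff_lt_rowLen, rowLen_insertedShape]

theorem mem_of_succ_mem_insertedShape {μ : YoungDiagram} {c i j : ℕ}
    (hcell : (i, j + 1) ∈ insertedShape μ c) : (i, j) ∈ μ := by
  rw [mem_insertedShape] at hcell
  rw [YoungDiagram.mem_iff_lt_rowLen]
  split_ifs at hcell <;> omega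

section insertion

variable {μ : YoungDiagram} (T : SemistandardYoungTableau μ)

theorem insertPos_le (i v : ℕ) : insertPos T i v ≤ μ.rowLen i :=
  (Finset.card_filter_le _ _).trans (Finset.card_range _).le

theorem entry_le_of_lt_insertPos {i v j : ℕ} (hj : j < insertPos T i v) : T i j ≤ v := by
  by_contra! hv
  have hsub :
      (Finset.range (μ.rowLen i)).filter (fun k => T.entry i k ≤ v) ⊆ Finset.range j := by
    intro k hk
    rw [Finset.mem_filter, Finset.mem_range, ← YoungDiagram.mem_iff_lt_rowLen] at hk
    rw [Finset.mem_range]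
    by_contra! hjk
    exact (hv.trans_le (T.row_weak_of_le hjk hk.1)).not_ge hk.2
  have := Finset.card_le_card hsub
  rw [Finset.card_range] at this
  exact hj.not_ge this

theorem lt_entry_of_insertPos_le {i v j : ℕ} (hj : insertPos T i v ≤ j)
    (hcell : (i, j) ∈ μ) : v < T i j := by
  by_contra! hv
  have hsub : Finset.range (j + 1) ⊆
      (Finset.range (μ.rowLen i)).filter (fun k => T.entry i k ≤ v) := by
    intro k hk
    rw [Finset.mem_range, Nat.lt_succ_iff] at hk
    rw [Finset.mem_filter, Finset.mem_range, ← YoungDiagram.mem_iff_lt_rowLen]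
    exact ⟨μ.up_left_mem le_rfl hk hcell, (T.row_weak_of_le hk hcell).trans hv⟩
  have := Finset.card_le_card hsub
  rw [Finset.card_range] at this
  exact (Nat.lt_succ_of_le hj).not_ge this

variable {c : ℕ} (t : Fin c → ℕ) {i : ℕ}

theorem insertedEntry_of_lt_insertPos (h : i < c) {j : ℕ}
    (hj : j < insertPos T i (t ⟨i, h⟩)) : insertedEntry T t i j = T i j := by
  simp [insertedEntry, h, hj]

theorem insertedEntry_insertPos (h : i < c) :
    insertedEntry T t i (insertPos T i (t ⟨i, h⟩)) = t ⟨i, h⟩ := by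
  simp [insertedEntry, h]

theorem insertedEntry_succ_of_insertPos_le (h : i < c) {k : ℕ}
    (hk : insertPos T i (t ⟨i, h⟩) ≤ k) : insertedEntry T t i (k + 1) = T i k := by
  have h₁ : ¬ k + 1 < insertPos T i (t ⟨i, h⟩) := by omega
  have h₂ : k + 1 ≠ insertPos T i (t ⟨i, h⟩) := by omega
  simp [insertedEntry, h, h₁, h₂]

theorem insertedEntry_of_not_lt (h : ¬ i < c) (j : ℕ) : insertedEntry T t i j = T i j := by
  simp [insertedEntry, h]

theorem insertedEntry_le_entry {j : ℕ} (hcell : (i, j) ∈ μ) :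
    insertedEntry T t i j ≤ T i j := by
  by_cases h : i < c
  · rcases lt_trichotomy j (insertPos T i (t ⟨i, h⟩)) with hj | rfl | hj
    · rw [insertedEntry_of_lt_insertPos T t h hj]
    · rw [insertedEntry_insertPos]
      exact (lt_entry_of_insertPos_le T le_rfl hcell).le
    · obtain ⟨k, rfl⟩ : ∃ k, j = k + 1 := ⟨j - 1, by omega⟩
      rw [insertedEntry_succ_of_insertPos_le T t h (by omega)]
      exact T.row_weak_of_le k.le_succ hcell
  · rw [insertedEntry_of_not_lt T t h]

theorem insertedEntry_le_of_le_insertPos (h : i < c) {j : ℕ}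
    (hj : j ≤ insertPos T i (t ⟨i, h⟩)) : insertedEntry T t i j ≤ t ⟨i, h⟩ := by
  rcases hj.lt_or_eq with hj | rfl
  · rw [insertedEntry_of_lt_insertPos T t h hj]
    exact entry_le_of_lt_insertPos T hj
  · rw [insertedEntry_insertPos]

theorem le_insertedEntry_of_insertPos_le (h : i < c) {j : ℕ}
    (hj : insertPos T i (t ⟨i, h⟩) ≤ j) (hj' : j ≤ μ.rowLen i) :
    t ⟨i, h⟩ ≤ insertedEntry T t i j := by
  rcases hj.lt_or_eq with hj | rfl
  · obtain ⟨k, rfl⟩ : ∃ k, j = k + 1 := ⟨j - 1, by omega⟩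
    rw [insertedEntry_succ_of_insertPos_le T t h (by omega)]
    exact (lt_entry_of_insertPos_le T (by omega) (YoungDiagram.mem_iff_lt_rowLen.2 hj')).le
  · rw [insertedEntry_insertPos]

theorem entry_le_insertedEntry_succ {j : ℕ} (hcell : (i, j + 1) ∈ insertedShape μ c) :
    T i j ≤ insertedEntry T t i (j + 1) := by
  by_cases h : i < c
  · rcases lt_trichotomy (j + 1) (insertPos T i (t ⟨i, h⟩)) with hj | hj | hj
    · rw [insertedEntry_of_lt_insertPos T t h hj]
      exact T.row_weak_of_le j.le_succ
        (YoungDiagram.mem_iff_lt_rowLen.2 (hj.trans_le (insertPos_le T i _)))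
    · rw [hj, insertedEntry_insertPos]
      exact entry_le_of_lt_insertPos T (by omega)
    · rw [insertedEntry_succ_of_insertPos_le T t h (by omega)]
  · rw [insertedEntry_of_not_lt T t h]
    rw [mem_insertedShape, if_neg h, add_zero, ← YoungDiagram.mem_iff_lt_rowLen] at hcell
    exact T.row_weak_of_le j.le_succ hcell

theorem insertedEntry_lt_insertedEntry_succ (ht : StrictMono t) {j : ℕ}
    (hcell : (i + 1, j) ∈ insertedShape μ c) :
    insertedEntry T t i j < insertedEntry T t (i + 1) j := by
  by_cases hq : ∃ h : i + 1 < c, insertPos T (i + 1) (t ⟨i + 1, h⟩) ≤ j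
  · obtain ⟨h', hq⟩ := hq
    have h : i < c := i.lt_succ_self.trans h'
    have hj : j ≤ μ.rowLen (i + 1) := by
      rw [mem_insertedShape, if_pos h'] at hcell
      omega
    rcases le_or_gt j (insertPos T i (t ⟨i, h⟩)) with hp | hp
    · calc insertedEntry T t i j ≤ t ⟨i, h⟩ := insertedEntry_le_of_le_insertPos T t h hp
        _ < t ⟨i + 1, h'⟩ := ht i.lt_succ_self
        _ ≤ insertedEntry T t (i + 1) j := le_insertedEntry_of_insertPos_le T t h' hq hj
    · obtain ⟨k, rfl⟩ : ∃ k, j = k + 1 := ⟨j - 1, by omega⟩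
      rw [insertedEntry_succ_of_insertPos_le T t h (by omega)]
      calc T i k < T (i + 1) k :=
            T.col_strict i.lt_succ_self (mem_of_succ_mem_insertedShape hcell)
        _ ≤ insertedEntry T t (i + 1) (k + 1) := entry_le_insertedEntry_succ T t hcell
  · obtain ⟨hcell', heq⟩ :
        (i + 1, j) ∈ μ ∧ insertedEntry T t (i + 1) j = T (i + 1) j := by
      rw [YoungDiagram.mem_iff_lt_rowLen]
      by_cases h' : i + 1 < c
      · have hj : j < insertPos T (i + 1) (t ⟨i + 1, h'⟩) :=
          not_le.mp fun hj => hq ⟨h', hj⟩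
        exact ⟨hj.trans_le (insertPos_le T _ _), insertedEntry_of_lt_insertPos T t h' hj⟩
      · rw [mem_insertedShape, if_neg h', add_zero] at hcell
        exact ⟨hcell, insertedEntry_of_not_lt T t h' j⟩
    calc insertedEntry T t i j ≤ T i j :=
          insertedEntry_le_entry T t (μ.up_left_mem i.le_succ le_rfl hcell')
      _ < T (i + 1) j := T.col_strict i.lt_succ_self hcell'
      _ = insertedEntry T t (i + 1) j := heq.symm

def insertedTableau (ht : StrictMono t) : SemistandardYoungTableau (insertedShape μ c) where
  entry := insertedEntry T t
  row_weak' := by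
    intro i j₁ j₂ hj hcell
    obtain ⟨k, rfl⟩ : ∃ k, j₂ = k + 1 := ⟨j₂ - 1, by omega⟩
    have hk : (i, k) ∈ μ := mem_of_succ_mem_insertedShape hcell
    calc insertedEntry T t i j₁ ≤ T i j₁ :=
          insertedEntry_le_entry T t (μ.up_left_mem le_rfl (by omega) hk)
      _ ≤ T i k := T.row_weak_of_le (by omega) hk
      _ ≤ insertedEntry T t i (k + 1) := entry_le_insertedEntry_succ T t hcell
  col_strict' :=
    YoungDiagram.col_strict_of_succ fun _ _ => insertedEntry_lt_insertedEntry_succ T t ht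
  zeros' := by
    intro i j hcell
    rw [mem_insertedShape, not_lt] at hcell
    by_cases h : i < c
    · rw [if_pos h] at hcell
      have hp := insertPos_le T i (t ⟨i, h⟩)
      obtain ⟨k, rfl⟩ : ∃ k, j = k + 1 := ⟨j - 1, by omega⟩
      rw [insertedEntry_succ_of_insertPos_le T t h (by omega)]
      exact T.zeros (by rw [YoungDiagram.mem_iff_lt_rowLen]; omega)
    · rw [if_neg h, add_zero] at hcell
      rw [insertedEntry_of_not_lt T t h]
      exact T.zeros (by rw [YoungDiagram.mem_iff_lt_rowLen]; omega)

end insertion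

theorem sequence_insertion_is_ssyt_general {μ : YoungDiagram} (T : SemistandardYoungTableau μ)
    {c : ℕ} (t : Fin c → ℕ) (ht : StrictMono t) :
    ∃ (μ' : YoungDiagram) (T' : SemistandardYoungTableau μ'),
      (∀ i, μ'.rowLen i = μ.rowLen i + if i < c then 1 else 0) ∧
      (∀ i j, T'.entry i j = insertedEntry T t i j) :=
  ⟨insertedShape μ c, insertedTableau T t ht, rowLen_insertedShape μ c, fun _ _ => rfl⟩

/-- Sequence insertion of a strictly increasing sequence of positive integers into a
semistandard Young tableau yields a semistandard Young tableau: there is a Young diagram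
`μ'` (the shape `μ` with one box added at the end of each of the first `c` rows) and a
semistandard Young tableau `T'` of shape `μ'` whose entries are exactly the result of the
insertion. -/
theorem sequence_insertion_is_ssyt {μ : YoungDiagram} (T : SemistandardYoungTableau μ)
    {c : ℕ} (t : Fin c → ℕ) (ht : StrictMono t) (hpos : ∀ i, 0 < t i) :
    ∃ (μ' : YoungDiagram) (T' : SemistandardYoungTableau μ'),
      (∀ i, μ'.rowLen i = μ.rowLen i + if i < c then 1 else 0) ∧
      (∀ i j, T'.entry i j = insertedEntry T t i j) :=
  sequence_insertion_is_ssyt_general T t ht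
end

section
/- Sequence insertions commute: for a semistandard Young tableau T and two strictly increasing sequences s and t of the same admissible form, inserting s into T and then t gives the same tableau as inserting t and then s. -/
/-!
Both insertions act row by row, so it suffices to compare, in a single weakly increasing row,
inserting `a` and then `b` with inserting `b` and then `a`. If `p` and `q` are the insertion
positions of `a` and `b` in the original row, then after inserting `a` the position of `b` is
`q + 1` when `a ≤ b` and `q` otherwise; since `a ≤ b` forces `p ≤ q`, both orders place `a` and
`b` in the same two cells and shift the remaining entries identically.
-/

open Finset

lemma Finset.eq_range_card_of_forall_lt_mem {S : Finset ℕ} (h : ∀ j ∈ S, ∀ k < j, k ∈ S) :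
    S = range #S := by
  ext n
  rw [mem_range]
  constructor
  · intro hn
    have hsub : range (n + 1) ⊆ S := fun k hk =>
      (Nat.lt_succ_iff_lt_or_eq.mp (mem_range.mp hk)).elim (h n hn k) (· ▸ hn)
    simpa using card_le_card hsub
  · intro hn
    by_contra hns
    have hsub : S ⊆ range n := fun m hm => mem_range.mpr <| lt_of_not_ge fun hnm =>
      hns <| (eq_or_lt_of_le hnm).elim (· ▸ hm) (h m hm n)
    simpa using hn.trans_le (card_le_card hsub)

def insertAt (r : ℕ → ℕ) (v n j : ℕ) : ℕ :=
  if j < n then r j else if j = n then v else r (j - 1)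

def IsInsertPos (r : ℕ → ℕ) (L v p : ℕ) : Prop :=
  ∀ j, j < p ↔ j < L ∧ r j ≤ v

namespace IsInsertPos

variable {r : ℕ → ℕ} {L a b p q : ℕ}

lemma le_length (hp : IsInsertPos r L a p) : p ≤ L := by
  have := hp L; omega

lemma unique {p' : ℕ} (hp : IsInsertPos r L a p) (hp' : IsInsertPos r L a p') : p = p' := by
  have := hp p; have := hp' p; have := hp p'; have := hp' p'; omega

lemma mono (hp : IsInsertPos r L a p) (hq : IsInsertPos r L b q) (hab : a ≤ b) : p ≤ q := by
  by_contra! hqp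
  have := hp q; have := hq q; omega

lemma insertAt (hp : IsInsertPos r L a p) (hq : IsInsertPos r L b q) :
    IsInsertPos (insertAt r a p) (L + 1) b (if a ≤ b then q + 1 else q) := by
  intro k
  have := hp.le_length; have := hq.le_length
  have := hp k; have := hq k; have := hp (k - 1); have := hq (k - 1)
  simp only [_root_.insertAt]
  split_ifs <;> omega

end IsInsertPos

lemma insertAt_insertAt_of_le (r : ℕ → ℕ) (a b : ℕ) {p q : ℕ} (hpq : p ≤ q) :
    insertAt (insertAt r a p) b (q + 1) = insertAt (insertAt r b q) a p := by
  funext j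
  simp only [insertAt]
  split_ifs <;> first | rfl | omega

lemma insertAt_insertAt_comm {r : ℕ → ℕ} {L a b p q : ℕ}
    (hp : IsInsertPos r L a p) (hq : IsInsertPos r L b q) :
    insertAt (insertAt r a p) b (if a ≤ b then q + 1 else q)
      = insertAt (insertAt r b q) a (if b ≤ a then p + 1 else p) := by
  rcases lt_trichotomy a b with hab | rfl | hba
  · rw [if_pos hab.le, if_neg hab.not_ge]
    exact insertAt_insertAt_of_le r a b (hp.mono hq hab.le)
  · rw [hp.unique hq]
  · rw [if_neg hba.not_ge, if_pos hba.le]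
    exact (insertAt_insertAt_of_le r b a (hq.mono hp hba.le)).symm

lemma isInsertPos_insertPos {μ : YoungDiagram} (T : SemistandardYoungTableau μ) (i v : ℕ) :
    IsInsertPos (T.entry i) (μ.rowLen i) v (insertPos T i v) := by
  have hlower : ∀ a ∈ (range (μ.rowLen i)).filter (fun j => T.entry i j ≤ v),
      ∀ k < a, k ∈ (range (μ.rowLen i)).filter (fun j => T.entry i j ≤ v) := by
    intro a ha k hk
    simp only [mem_filter, mem_range] at ha ⊢
    exact ⟨hk.trans ha.1, (T.row_weak hk (YoungDiagram.mem_iff_lt_rowLen.mpr ha.1)).trans ha.2⟩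
  intro j
  rw [insertPos, ← mem_range, ← Finset.eq_range_card_of_forall_lt_mem hlower, mem_filter,
    mem_range]

lemma insertedEntry_of_lt {μ : YoungDiagram} (T : SemistandardYoungTableau μ) {c : ℕ}
    (t : Fin c → ℕ) {i : ℕ} (h : i < c) (j : ℕ) :
    insertedEntry T t i j = insertAt (T.entry i) (t ⟨i, h⟩) (insertPos T i (t ⟨i, h⟩)) j := by
  simp only [insertedEntry, dif_pos h, insertAt]

lemma insertPos_of_row_eq_insertAt {μ μ' : YoungDiagram} (T : SemistandardYoungTableau μ)
    (T' : SemistandardYoungTableau μ') (i a b : ℕ)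
    (hrow : T'.entry i = insertAt (T.entry i) a (insertPos T i a))
    (hlen : μ'.rowLen i = μ.rowLen i + 1) :
    insertPos T' i b = if a ≤ b then insertPos T i b + 1 else insertPos T i b := by
  have h := (isInsertPos_insertPos T i a).insertAt (isInsertPos_insertPos T i b)
  rw [← hrow, ← hlen] at h
  exact (isInsertPos_insertPos T' i b).unique h

theorem sequence_insertions_commute_general {μ : YoungDiagram} (T : SemistandardYoungTableau μ)
    {c : ℕ} (s t : Fin c → ℕ)
    (μ₁ : YoungDiagram) (T₁ : SemistandardYoungTableau μ₁)
    (h₁len : ∀ i, μ₁.rowLen i = μ.rowLen i + if i < c then 1 else 0)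
    (h₁ : ∀ i j, T₁.entry i j = insertedEntry T s i j)
    (μ₂ : YoungDiagram) (T₂ : SemistandardYoungTableau μ₂)
    (h₂len : ∀ i, μ₂.rowLen i = μ.rowLen i + if i < c then 1 else 0)
    (h₂ : ∀ i j, T₂.entry i j = insertedEntry T t i j) :
    ∀ i j, insertedEntry T₁ t i j = insertedEntry T₂ s i j := by
  intro i j
  by_cases h : i < c
  · have hrow₁ := funext fun k => (h₁ i k).trans (insertedEntry_of_lt T s h k)
    have hrow₂ := funext fun k => (h₂ i k).trans (insertedEntry_of_lt T t h k)
    have hlen₁ : μ₁.rowLen i = μ.rowLen i + 1 := by rw [h₁len, if_pos h]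
    have hlen₂ : μ₂.rowLen i = μ.rowLen i + 1 := by rw [h₂len, if_pos h]
    rw [insertedEntry_of_lt T₁ t h, insertedEntry_of_lt T₂ s h,
      insertPos_of_row_eq_insertAt T T₁ i _ _ hrow₁ hlen₁,
      insertPos_of_row_eq_insertAt T T₂ i _ _ hrow₂ hlen₂, hrow₁, hrow₂,
      insertAt_insertAt_comm (isInsertPos_insertPos T i _) (isInsertPos_insertPos T i _)]
  · simp only [insertedEntry, dif_neg h, h₁, h₂]

/-- Sequence insertions commute: inserting the strictly increasing sequence `s` into a
semistandard Young tableau `T` and then inserting `t` into the result gives the same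
tableau (same shape and same entries) as inserting `t` first and then `s`. -/
theorem sequence_insertions_commute {μ : YoungDiagram} (T : SemistandardYoungTableau μ)
    {c : ℕ} (s t : Fin c → ℕ) (hs : StrictMono s) (ht : StrictMono t)
    (hspos : ∀ i, 0 < s i) (htpos : ∀ i, 0 < t i)
    (μ₁ : YoungDiagram) (T₁ : SemistandardYoungTableau μ₁)
    (h₁len : ∀ i, μ₁.rowLen i = μ.rowLen i + if i < c then 1 else 0)
    (h₁ : ∀ i j, T₁.entry i j = insertedEntry T s i j)
    (μ₂ : YoungDiagram) (T₂ : SemistandardYoungTableau μ₂)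
    (h₂len : ∀ i, μ₂.rowLen i = μ.rowLen i + if i < c then 1 else 0)
    (h₂ : ∀ i j, T₂.entry i j = insertedEntry T t i j) :
    ∀ i j, insertedEntry T₁ t i j = insertedEntry T₂ s i j :=
  sequence_insertions_commute_general T s t μ₁ T₁ h₁len h₁ μ₂ T₂ h₂len h₂
end

section
/- Let λ ⊇ μ be partitions with at most n parts and let λ', μ' denote their conjugates, with λ' having at most k parts. Then the skew Schur polynomial satisfies the dual Jacobi–Trudi identity S_{λ/μ}(x1,...,xn) = det( e_{λ'_i - μ'_j - i + j}(x1,...,xn) )_{1 ≤ i,j ≤ k}, where e_m is the m-th elementary symmetric polynomial (e_m = 0 for m < 0). -/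
/-- The set of cells of the skew Young diagram `lam/mu`, where `lam mu : ℕ → ℕ` give the
row lengths of the outer and inner shapes and only the first `n` rows may be nonempty. -/
def skewCells (n : ℕ) (lam mu : ℕ → ℕ) : Finset (ℕ × ℕ) :=
  (Finset.range n ×ˢ Finset.range ((Finset.range n).sup lam)).filter
    (fun p => mu p.1 ≤ p.2 ∧ p.2 < lam p.1)

/-- A filling of the skew shape `lam/mu` with entries in `{0, ..., n-1}` is a semistandard
Young tableau if its rows are weakly increasing and its columns are strictly increasing. -/
def IsSSYTFilling (n : ℕ) (lam mu : ℕ → ℕ)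
    (T : {p // p ∈ skewCells n lam mu} → Fin n) : Prop :=
  (∀ a b : {p // p ∈ skewCells n lam mu},
      a.1.1 = b.1.1 → a.1.2 + 1 = b.1.2 → T a ≤ T b) ∧
  (∀ a b : {p // p ∈ skewCells n lam mu},
      a.1.1 + 1 = b.1.1 → a.1.2 = b.1.2 → T a < T b)

instance (n : ℕ) (lam mu : ℕ → ℕ) : DecidablePred (IsSSYTFilling n lam mu) := fun _ => by
  unfold IsSSYTFilling; infer_instance

/-- The skew Schur polynomial `S_{lam/mu}(x 0, ..., x (n-1))`: the sum over all
semistandard skew Young tableaux of shape `lam/mu` with entries in `{1, ..., n}` of the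
corresponding monomial. -/
def skewSchur (n : ℕ) (lam mu : ℕ → ℕ) {R : Type*} [CommSemiring R] (x : Fin n → R) : R :=
  ∑ T ∈ (Finset.univ : Finset ({p // p ∈ skewCells n lam mu} → Fin n)).filter
      (IsSSYTFilling n lam mu),
    ∏ c, x (T c)

/-- The `k`-th elementary symmetric polynomial in `x 0, ..., x (n-1)`. -/
def esymVal (n k : ℕ) {R : Type*} [CommSemiring R] (x : Fin n → R) : R :=
  ∑ σ ∈ Finset.powersetCard k (Finset.univ : Finset (Fin n)), ∏ i ∈ σ, x i

/-- Elementary symmetric polynomials with integer index: `e m = 0` for `m < 0`. -/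
def esymValZ (n : ℕ) (m : ℤ) {R : Type*} [CommSemiring R] (x : Fin n → R) : R :=
  if 0 ≤ m then esymVal n m.toNat x else 0

/-- The `i`-th part (`1`-indexed as `i+1`) of the conjugate of the partition `lam`:
`lam'_{i+1} = #{j : lam j ≥ i + 1}`. -/
def conjPart (n : ℕ) (lam : ℕ → ℕ) (i : ℕ) : ℕ :=
  ((Finset.range n).filter (fun j => i + 1 ≤ lam j)).card

/-!
Induction on the number of variables. In a semistandard tableau the cells holding the largest
letter `n + 1` lie at the bottoms of their columns and form a horizontal strip `lam/nu`, one cell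
in each column of some set `S`; deleting them leaves a tableau of shape `nu/mu` in `n` letters,
and every such strip occurs. On the other side, `e_m(x, y) = e_m(x) + y e_{m-1}(x)` and
multilinearity in the rows write the determinant as a sum over row sets `S` of `y^|S|` times the
determinant with `lam'_i` lowered by one for `i ∈ S`. That determinant vanishes (two equal rows,
or a zero block) unless `lam' - 1_S` is the conjugate of a partition `nu ⊇ mu` for which `lam/nu`
is a horizontal strip in the columns `S`, so the two expansions agree term by term.
-/

open Finset

section Conjugate

theorem Finset.filter_range_eq_range_card {p : ℕ → Prop} [DecidablePred p] (hp : Antitone p)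
    (r : ℕ) : (range r).filter p = range ((range r).filter p).card := by
  induction r with
  | zero => simp
  | succ r ih =>
    by_cases h : p r
    · have hall : (range (r + 1)).filter p = range (r + 1) :=
        filter_true_of_mem fun j hj => hp (Nat.le_of_lt_succ (mem_range.1 hj)) h
      rw [hall, card_range]
    · simpa [range_add_one, filter_insert, h] using ih

variable {r : ℕ} {f g : ℕ → ℕ}

theorem lt_conjPart_iff (hf : Antitone f) {i j : ℕ} :
    j < conjPart r f i ↔ j < r ∧ i < f j := by
  have hp : Antitone fun j => i + 1 ≤ f j := fun a b hab h => h.trans (hf hab)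
  rw [← mem_range, conjPart, ← filter_range_eq_range_card hp, mem_filter, mem_range]
  rfl

theorem conjPart_le (f : ℕ → ℕ) (i : ℕ) : conjPart r f i ≤ r :=
  (card_filter_le _ _).trans_eq (card_range r)

theorem conjPart_antitone (f : ℕ → ℕ) : Antitone (conjPart r f) := by
  intro i i' h
  apply card_le_card
  intro j
  simp only [mem_filter]
  exact fun ⟨hj, hij⟩ => ⟨hj, by omega⟩

theorem conjPart_mono (h : ∀ j < r, f j ≤ g j) (i : ℕ) : conjPart r f i ≤ conjPart r g i := by
  apply card_le_card
  intro j
  simp only [mem_filter, mem_range]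
  exact fun ⟨hj, hij⟩ => ⟨hj, hij.trans (h j hj)⟩

theorem conjPart_congr (h : ∀ j < r, f j = g j) : conjPart r f = conjPart r g :=
  funext fun i => (conjPart_mono (fun j hj => (h j hj).le) i).antisymm
    (conjPart_mono (fun j hj => (h j hj).ge) i)

theorem conjPart_conjPart (hf : Antitone f) {M j : ℕ} (hj : j < r) (hfj : f j ≤ M) :
    conjPart M (conjPart r f) j = f j := by
  rw [conjPart]
  convert card_range (f j) using 2
  ext i
  rw [mem_filter, mem_range, mem_range, ← Nat.lt_iff_add_one_le, lt_conjPart_iff hf]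
  omega

end Conjugate

section Cells

variable {r : ℕ} {lam mu : ℕ → ℕ}

theorem mem_skewCells {p : ℕ × ℕ} :
    p ∈ skewCells r lam mu ↔ p.1 < r ∧ mu p.1 ≤ p.2 ∧ p.2 < lam p.1 := by
  simp only [skewCells, mem_filter, mem_product, mem_range]
  exact ⟨fun ⟨⟨h1, _⟩, h2⟩ => ⟨h1, h2⟩,
    fun ⟨h1, h2, h3⟩ => ⟨⟨h1, h3.trans_le (le_sup (mem_range.2 h1))⟩, h2, h3⟩⟩

theorem mem_skewCells_iff_conjPart (hlam : Antitone lam) (hmu : Antitone mu) {p : ℕ × ℕ} :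
    p ∈ skewCells r lam mu ↔ conjPart r mu p.2 ≤ p.1 ∧ p.1 < conjPart r lam p.2 := by
  have hmu' := lt_conjPart_iff (r := r) hmu (i := p.2) (j := p.1)
  rw [mem_skewCells, lt_conjPart_iff hlam]
  omega

theorem snd_lt_of_mem_skewCells (hlam : Antitone lam) {k : ℕ} (hk : lam 0 ≤ k) {p : ℕ × ℕ}
    (hp : p ∈ skewCells r lam mu) : p.2 < k :=
  ((mem_skewCells.1 hp).2.2.trans_le (hlam (Nat.zero_le _))).trans_le hk

end Cells

section Esymm

variable {R : Type*}

theorem Multiset.esymm_cons_succ [CommSemiring R] (a : R) (s : Multiset R) (k : ℕ) :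
    (a ::ₘ s).esymm (k + 1) = s.esymm (k + 1) + a * s.esymm k := by
  simp [Multiset.esymm, Multiset.powersetCard_cons, Multiset.sum_map_mul_left]

variable [CommSemiring R] {n : ℕ}

theorem esymVal_eq_esymm (k : ℕ) (x : Fin n → R) : esymVal n k x = (univ.val.map x).esymm k :=
  (esymm_map_val x univ k).symm

theorem esymVal_succ (k : ℕ) (x : Fin (n + 1) → R) :
    esymVal (n + 1) (k + 1) x =
      esymVal n (k + 1) (x ∘ Fin.castSucc) + x (Fin.last n) * esymVal n k (x ∘ Fin.castSucc) := by
  have hcons : univ.val.map x = x (Fin.last n) ::ₘ univ.val.map (x ∘ Fin.castSucc) := by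
    rw [Fin.univ_val_map, Fin.univ_val_map, List.ofFn_succ', List.concat_eq_append,
      Multiset.cons_coe]
    exact Multiset.coe_eq_coe.2 (List.perm_append_singleton _ _)
  simp only [esymVal_eq_esymm, hcons, Multiset.esymm_cons_succ]

theorem esymValZ_of_neg {m : ℤ} (hm : m < 0) (x : Fin n → R) : esymValZ n m x = 0 :=
  if_neg (not_le.2 hm)

theorem esymValZ_natCast (m : ℕ) (x : Fin n → R) : esymValZ n m x = esymVal n m x := by
  simp [esymValZ]

theorem esymValZ_zero (x : Fin n → R) : esymValZ n 0 x = 1 := by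
  simp [esymValZ, esymVal]

theorem esymValZ_fin_zero {m : ℤ} (hm : m ≠ 0) (x : Fin 0 → R) : esymValZ 0 m x = 0 := by
  unfold esymValZ esymVal
  split_ifs with h
  · rw [powersetCard_eq_empty.2 (by rw [card_univ, Fintype.card_fin]; omega), sum_empty]
  · rfl

theorem esymValZ_succ (m : ℤ) (x : Fin (n + 1) → R) :
    esymValZ (n + 1) m x =
      esymValZ n m (x ∘ Fin.castSucc) + x (Fin.last n) * esymValZ n (m - 1) (x ∘ Fin.castSucc) := by
  rcases lt_or_ge m 0 with hm | hm
  · rw [esymValZ_of_neg hm, esymValZ_of_neg hm, esymValZ_of_neg (by omega), mul_zero, add_zero]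
  lift m to ℕ using hm
  cases m with
  | zero => simp [esymValZ_zero, esymValZ_of_neg]
  | succ m =>
    rw [show ((m + 1 : ℕ) : ℤ) - 1 = m by omega]
    simp only [esymValZ_natCast]
    exact esymVal_succ m x

end Esymm

section Determinant

theorem Fin.exists_succ_lt_of_not_antitone {k : ℕ} {α : Type*} [LinearOrder α] {f : Fin k → α}
    (h : ¬ Antitone f) : ∃ i j : Fin k, (j : ℕ) = i + 1 ∧ f i < f j := by
  cases k with
  | zero => exact absurd (fun i => i.elim0) h
  | succ k =>
    simp only [Fin.antitone_iff_succ_le, not_forall, not_le] at h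
    obtain ⟨i, hi⟩ := h
    exact ⟨i.castSucc, i.succ, rfl, hi⟩

variable {R : Type*} [CommRing R] {k : ℕ}

/-- Every permutation of `Fin k` sends some `j ≤ t` to some `i ≥ t`, so a zero block on
`{i ≥ t} × {j ≤ t}` kills every term of the Leibniz expansion. -/
theorem Matrix.det_eq_zero_of_lower_left_eq_zero (M : Matrix (Fin k) (Fin k) R) (t : Fin k)
    (h : ∀ i j, t ≤ i → j ≤ t → M i j = 0) : M.det = 0 := by
  rw [Matrix.det_apply]
  refine sum_eq_zero fun σ _ => ?_
  obtain ⟨j, hjt, htj⟩ : ∃ j, j ≤ t ∧ t ≤ σ j := by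
    by_contra! hcon
    have hcard := card_le_card_of_injOn σ (fun j hj => mem_Iio.2 (hcon j (mem_Iic.1 hj)))
      σ.injective.injOn
    rw [Fin.card_Iic, Fin.card_Iio] at hcard
    omega
  rw [prod_eq_zero (f := fun i => M (σ i) i) (mem_univ j) (h _ _ htj hjt), smul_zero]

theorem Matrix.det_smul_add_rows {ι : Type*} [Fintype ι] [DecidableEq ι] (c : R)
    (A B : ι → ι → R) :
    (Matrix.of fun i => c • B i + A i).det =
      ∑ s : Finset ι, c ^ s.card * (Matrix.of fun i => if i ∈ s then B i else A i).det := by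
  let D := (Matrix.detRowAlternating : (ι → R) [⋀^ι]→ₗ[R] R).toMultilinearMap
  have hsplit (s : Finset ι) : s.piecewise (fun i => c • B i) A =
      s.piecewise (fun i => c • s.piecewise B A i) (s.piecewise B A) := by
    ext1 i
    by_cases hi : i ∈ s <;> simp [hi]
  calc (Matrix.of fun i => c • B i + A i).det = D ((fun i => c • B i) + fun i => A i) := rfl
    _ = ∑ s, D (s.piecewise (fun i => c • B i) A) := D.map_add_univ _ _
    _ = _ := sum_congr rfl fun s _ => by
      rw [hsplit, D.map_piecewise_smul, prod_const, smul_eq_mul]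
      rfl

end Determinant

section JacobiTrudi

variable {R : Type*}

def jacobiTrudi [CommSemiring R] (n : ℕ) {k : ℕ} (a b : Fin k → ℤ) (x : Fin n → R) :
    Matrix (Fin k) (Fin k) R :=
  Matrix.of fun i j => esymValZ n (a i - b j - i + j) x

variable [CommRing R] {n k : ℕ}

theorem det_jacobiTrudi_succ (a b : Fin k → ℤ) (x : Fin (n + 1) → R) :
    (jacobiTrudi (n + 1) a b x).det = ∑ S : Finset (Fin k), x (Fin.last n) ^ S.card *
      (jacobiTrudi n (fun i => a i - if i ∈ S then 1 else 0) b (x ∘ Fin.castSucc)).det := by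
  have hrows : jacobiTrudi (n + 1) a b x = Matrix.of fun i =>
      x (Fin.last n) • jacobiTrudi n (fun i => a i - 1) b (x ∘ Fin.castSucc) i +
        jacobiTrudi n a b (x ∘ Fin.castSucc) i := by
    ext i j
    simp only [jacobiTrudi, Matrix.of_apply, Pi.add_apply, Pi.smul_apply, smul_eq_mul]
    rw [esymValZ_succ, add_comm, show a i - 1 - b j - i + j = a i - b j - i + j - 1 by ring]
  rw [hrows]
  refine (Matrix.det_smul_add_rows _ (jacobiTrudi n a b _)
    (jacobiTrudi n (fun i => a i - 1) b _)).trans ?_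
  refine sum_congr rfl fun S _ => ?_
  congr 2
  ext i j
  by_cases hi : i ∈ S <;> simp [hi, jacobiTrudi]

theorem det_jacobiTrudi_self {a : Fin k → ℤ} (ha : Antitone a) (x : Fin n → R) :
    (jacobiTrudi n a a x).det = 1 := by
  rw [Matrix.det_of_isUpperTriangular]
  · exact prod_eq_one fun i _ => by simp [jacobiTrudi, esymValZ_zero]
  · intro i j (hji : j < i)
    have := ha hji.le
    have := Fin.lt_def.1 hji
    exact esymValZ_of_neg (by omega) x

theorem det_jacobiTrudi_eq_zero_of_lt {a b : Fin k → ℤ} (ha : Antitone a) (hb : Antitone b)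
    {t : Fin k} (h : a t < b t) (x : Fin n → R) : (jacobiTrudi n a b x).det = 0 :=
  Matrix.det_eq_zero_of_lower_left_eq_zero _ t fun i j hti hjt => by
    have := ha hti
    have := hb hjt
    have := (Fin.le_def.1 hjt).trans (Fin.le_def.1 hti)
    exact esymValZ_of_neg (by omega) x

theorem det_jacobiTrudi_fin_zero_eq_zero {a b : Fin k → ℤ} (ha : Antitone a) (hb : Antitone b)
    {t : Fin k} (h : b t < a t) (x : Fin 0 → R) : (jacobiTrudi 0 a b x).det = 0 := by
  rw [← Matrix.det_transpose]
  refine Matrix.det_eq_zero_of_lower_left_eq_zero _ t fun i j hti hjt => ?_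
  have := ha hjt
  have := hb hti
  have := (Fin.le_def.1 hjt).trans (Fin.le_def.1 hti)
  exact esymValZ_fin_zero (by omega) x

/-- Removing one from the rows `S` of an antitone `a` either keeps it antitone, or creates two
rows with `a_i - i = a_{i+1} - (i+1)`, which are then equal. -/
theorem antitone_and_le_of_det_jacobiTrudi_ne_zero {a b : Fin k → ℤ} (ha : Antitone a)
    (hb : Antitone b) {S : Finset (Fin k)} {x : Fin n → R}
    (h : (jacobiTrudi n (fun i => a i - if i ∈ S then 1 else 0) b x).det ≠ 0) :
    Antitone (fun i => a i - if i ∈ S then 1 else 0) ∧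
      ∀ i, b i ≤ a i - if i ∈ S then 1 else 0 := by
  have hanti : Antitone (fun i => a i - if i ∈ S then 1 else 0) := by
    by_contra hna
    obtain ⟨i, j, hij, hlt⟩ := Fin.exists_succ_lt_of_not_antitone hna
    have hji := ha (Fin.le_def.2 (by omega) : i ≤ j)
    refine h (Matrix.det_zero_of_row_eq (i := i) (j := j) (fun e => by simp [e] at hij) ?_)
    ext l
    simp only [jacobiTrudi, Matrix.of_apply]
    congr 1
    split_ifs at hlt ⊢ <;> omega
  refine ⟨hanti, fun t => ?_⟩
  by_contra! hlt
  exact h (det_jacobiTrudi_eq_zero_of_lt hanti hb hlt x)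

end JacobiTrudi

section Tableaux

variable {R : Type*}

/-- `IsSSYTFilling` with the number `r` of rows decoupled from the number `n` of letters:
deleting the largest letter does not delete a row. -/
def IsSSYT {n : ℕ} (r : ℕ) (lam mu : ℕ → ℕ) (T : {p // p ∈ skewCells r lam mu} → Fin n) :
    Prop :=
  (∀ a b : {p // p ∈ skewCells r lam mu},
      a.1.1 = b.1.1 → a.1.2 + 1 = b.1.2 → T a ≤ T b) ∧
  (∀ a b : {p // p ∈ skewCells r lam mu},
      a.1.1 + 1 = b.1.1 → a.1.2 = b.1.2 → T a < T b)

instance {n : ℕ} (r : ℕ) (lam mu : ℕ → ℕ) : DecidablePred (IsSSYT (n := n) r lam mu) :=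
  fun _ => by unfold IsSSYT; infer_instance

def skewSchurRows [CommSemiring R] (r : ℕ) (lam mu : ℕ → ℕ) {n : ℕ} (x : Fin n → R) : R :=
  ∑ T ∈ univ.filter (IsSSYT r lam mu), ∏ c, x (T c)

variable {n r : ℕ} {lam nu mu : ℕ → ℕ}

theorem skewSchurRows_of_skewCells_eq_empty [CommSemiring R] (h : skewCells r lam mu = ∅)
    (x : Fin n → R) : skewSchurRows r lam mu x = 1 := by
  have : IsEmpty {p // p ∈ skewCells r lam mu} := ⟨fun p => by simpa [h] using p.2⟩
  have hall : univ.filter (IsSSYT (n := n) r lam mu) = univ :=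
    filter_true_of_mem fun T _ => ⟨fun a => isEmptyElim a, fun a => isEmptyElim a⟩
  rw [skewSchurRows, hall]
  simp

theorem skewSchurRows_fin_zero_of_mem [CommSemiring R] {p : ℕ × ℕ}
    (hp : p ∈ skewCells r lam mu) (x : Fin 0 → R) : skewSchurRows r lam mu x = 0 := by
  have : IsEmpty ({p // p ∈ skewCells r lam mu} → Fin 0) := ⟨fun T => (T ⟨p, hp⟩).elim0⟩
  simp [skewSchurRows]

def extendByLast (T : {p // p ∈ skewCells r nu mu} → Fin n) :
    {p // p ∈ skewCells r lam mu} → Fin (n + 1) :=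
  fun p => if h : p.1 ∈ skewCells r nu mu then (T ⟨p.1, h⟩).castSucc else Fin.last n

theorem extendByLast_eq_last_iff (T : {p // p ∈ skewCells r nu mu} → Fin n)
    (p : {p // p ∈ skewCells r lam mu}) :
    extendByLast T p = Fin.last n ↔ p.1 ∉ skewCells r nu mu := by
  unfold extendByLast
  split_ifs with h <;> simp [h, Fin.castSucc_ne_last]

theorem isSSYT_extendByLast (hnu : Antitone nu) (hstrip : ∀ i, i + 1 < r → lam (i + 1) ≤ nu i)
    {T : {p // p ∈ skewCells r nu mu} → Fin n} (hT : IsSSYT r nu mu T) :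
    IsSSYT r lam mu (extendByLast T) := by
  constructor
  · intro a b hrow hcol
    by_cases hb : b.1 ∈ skewCells r nu mu
    · obtain ⟨ha1, ha2, -⟩ := mem_skewCells.1 a.2
      have hb3 := (mem_skewCells.1 hb).2.2
      have ha : a.1 ∈ skewCells r nu mu := mem_skewCells.2 ⟨ha1, ha2, by rw [hrow]; omega⟩
      simp only [extendByLast, dif_pos ha, dif_pos hb, Fin.castSucc_le_castSucc_iff]
      exact hT.1 ⟨_, ha⟩ ⟨_, hb⟩ hrow hcol
    · simp only [extendByLast, dif_neg hb]
      exact Fin.le_last _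
  · intro a b hrow hcol
    obtain ⟨ha1, ha2, -⟩ := mem_skewCells.1 a.2
    obtain ⟨hb1, -, hb3⟩ := mem_skewCells.1 b.2
    by_cases hb : b.1 ∈ skewCells r nu mu
    · have ha : a.1 ∈ skewCells r nu mu := mem_skewCells.2 ⟨ha1, ha2,
        hcol ▸ (mem_skewCells.1 hb).2.2.trans_le (hnu (by omega))⟩
      simp only [extendByLast, dif_pos ha, dif_pos hb, Fin.castSucc_lt_castSucc_iff]
      exact hT.2 ⟨_, ha⟩ ⟨_, hb⟩ hrow hcol
    · have hlam := hstrip a.1.1 (by omega)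
      rw [hrow] at hlam
      have ha : a.1 ∈ skewCells r nu mu := mem_skewCells.2 ⟨ha1, ha2, by omega⟩
      simp only [extendByLast, dif_pos ha, dif_neg hb]
      exact Fin.castSucc_lt_last _

theorem IsSSYT.of_castSucc (hsub : skewCells r nu mu ⊆ skewCells r lam mu)
    {T : {p // p ∈ skewCells r lam mu} → Fin (n + 1)} {T' : {p // p ∈ skewCells r nu mu} → Fin n}
    (hT : IsSSYT r lam mu T) (h : ∀ q, (T' q).castSucc = T ⟨q.1, hsub q.2⟩) :
    IsSSYT r nu mu T' :=
  ⟨fun a b h1 h2 => Fin.castSucc_le_castSucc_iff.1 (by rw [h, h]; exact hT.1 _ _ h1 h2),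
    fun a b h1 h2 => Fin.castSucc_lt_castSucc_iff.1 (by rw [h, h]; exact hT.2 _ _ h1 h2)⟩

theorem prod_extendByLast [CommMonoid R] (hsub : skewCells r nu mu ⊆ skewCells r lam mu)
    (T : {p // p ∈ skewCells r nu mu} → Fin n) (x : Fin (n + 1) → R) :
    ∏ p, x (extendByLast (lam := lam) T p) =
      x (Fin.last n) ^ (skewCells r lam mu \ skewCells r nu mu).card * ∏ q, x (T q).castSucc := by
  set G : ℕ × ℕ → R := fun p =>
    if h : p ∈ skewCells r nu mu then x (T ⟨p, h⟩).castSucc else x (Fin.last n)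
  calc ∏ p, x (extendByLast (lam := lam) T p)
      = ∏ p : {p // p ∈ skewCells r lam mu}, G p := by
        refine prod_congr rfl fun p _ => ?_
        simp only [extendByLast, G]
        split_ifs <;> rfl
    _ = (∏ p ∈ skewCells r lam mu \ skewCells r nu mu, G p) * ∏ p ∈ skewCells r nu mu, G p := by
        rw [prod_coe_sort, prod_sdiff hsub]
    _ = _ := by
        rw [prod_congr rfl fun p hp => dif_neg (mem_sdiff.1 hp).2, prod_const, ← prod_coe_sort]
        exact congrArg _ (prod_congr rfl fun q _ => dif_pos q.2)

end Tableaux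

section Strip

/-- The conjugate of `lam` with the bottom cell of every column in `S` removed. -/
def stripConj (r : ℕ) (lam : ℕ → ℕ) {k : ℕ} (S : Finset (Fin k)) : Fin k → ℤ :=
  fun i => conjPart r lam i - if i ∈ S then 1 else 0

/-- `stripConj r lam S` is the conjugate of a partition `nu` with `mu ⊆ nu ⊆ lam`, and then
`lam/nu` is a horizontal strip occupying the columns `S`. -/
def Admissible (r : ℕ) (lam mu : ℕ → ℕ) {k : ℕ} (S : Finset (Fin k)) : Prop :=
  Antitone (stripConj r lam S) ∧ ∀ i : Fin k, (conjPart r mu i : ℤ) ≤ stripConj r lam S i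

instance (r : ℕ) (lam mu : ℕ → ℕ) (k : ℕ) : DecidablePred (Admissible r lam mu (k := k)) :=
  fun _ => by unfold Admissible Antitone; infer_instance

def stripShape (r : ℕ) (lam : ℕ → ℕ) {k : ℕ} (S : Finset (Fin k)) : ℕ → ℕ :=
  conjPart k fun c => if h : c < k then (stripConj r lam S ⟨c, h⟩).toNat else 0

def bottomCell (r : ℕ) (lam : ℕ → ℕ) (k : ℕ) : Fin k ↪ ℕ × ℕ :=
  ⟨fun c => (conjPart r lam c - 1, c), fun _ _ h => Fin.ext (congrArg Prod.snd h)⟩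

@[simp]
theorem bottomCell_apply (r : ℕ) (lam : ℕ → ℕ) {k : ℕ} (c : Fin k) :
    bottomCell r lam k c = (conjPart r lam c - 1, (c : ℕ)) :=
  rfl

theorem stripShape_antitone (r : ℕ) (lam : ℕ → ℕ) {k : ℕ} (S : Finset (Fin k)) :
    Antitone (stripShape r lam S) :=
  conjPart_antitone _

theorem stripShape_zero_le (r : ℕ) (lam : ℕ → ℕ) {k : ℕ} (S : Finset (Fin k)) :
    stripShape r lam S 0 ≤ k :=
  conjPart_le _ 0

theorem antitone_conjPart_cast {r k : ℕ} (f : ℕ → ℕ) :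
    Antitone fun i : Fin k => (conjPart r f i : ℤ) :=
  fun _ _ hij => Nat.cast_le.2 (conjPart_antitone f hij)

variable {r k : ℕ} {lam mu : ℕ → ℕ} {S : Finset (Fin k)}

namespace Admissible

theorem antitone_toNat (hS : Admissible r lam mu S) :
    Antitone fun c => if h : c < k then (stripConj r lam S ⟨c, h⟩).toNat else 0 := by
  intro c d hcd
  dsimp only
  by_cases hd : d < k
  · rw [dif_pos hd, dif_pos (hcd.trans_lt hd)]
    exact Int.toNat_le_toNat (hS.1 (Fin.le_def.2 hcd))
  · rw [dif_neg hd]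
    exact Nat.zero_le _

theorem conjPart_stripShape (hS : Admissible r lam mu S) (c : Fin k) :
    (conjPart r (stripShape r lam S) c : ℤ) = stripConj r lam S c := by
  have hle : stripConj r lam S c ≤ r := by
    have := conjPart_le (r := r) lam c
    simp only [stripConj]
    split_ifs <;> omega
  rw [stripShape, conjPart_conjPart hS.antitone_toNat c.2 (by rw [dif_pos c.2, Fin.eta]; omega),
    dif_pos c.2, Fin.eta, Int.toNat_of_nonneg ((Nat.cast_nonneg _).trans (hS.2 c))]

theorem skewCells_stripShape_subset (hlam : Antitone lam) (hmu : Antitone mu)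
    (hS : Admissible r lam mu S) : skewCells r (stripShape r lam S) mu ⊆ skewCells r lam mu := by
  intro p hp
  have hpk := snd_lt_of_mem_skewCells (stripShape_antitone r lam S) (stripShape_zero_le r lam S) hp
  have hconj := hS.conjPart_stripShape ⟨p.2, hpk⟩
  rw [mem_skewCells_iff_conjPart (stripShape_antitone r lam S) hmu] at hp
  rw [mem_skewCells_iff_conjPart hlam hmu]
  simp only [stripConj] at hconj
  split_ifs at hconj <;> omega

theorem stripShape_strip (hlam : Antitone lam) (hk : lam 0 ≤ k) (hS : Admissible r lam mu S)
    (i : ℕ) (hi : i + 1 < r) : lam (i + 1) ≤ stripShape r lam S i := by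
  by_contra! hlt
  set c := stripShape r lam S i
  have hck : c < k := hlt.trans_le ((hlam (Nat.zero_le _)).trans hk)
  have h1 : i + 1 < conjPart r lam c := (lt_conjPart_iff hlam).2 ⟨hi, hlt⟩
  have h2 : ¬ i < conjPart r (stripShape r lam S) c :=
    fun h => lt_irrefl c ((lt_conjPart_iff (stripShape_antitone r lam S)).1 h).2
  have h3 := hS.conjPart_stripShape ⟨c, hck⟩
  simp only [stripConj] at h3
  split_ifs at h3 <;> omega

theorem le_stripShape (hlam : Antitone lam) (hmu : Antitone mu) (hle : ∀ j < r, mu j ≤ lam j)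
    (hk : lam 0 ≤ k) (hS : Admissible r lam mu S) (j : ℕ) (hj : j < r) :
    mu j ≤ stripShape r lam S j :=
  calc mu j = conjPart k (conjPart r mu) j :=
        (conjPart_conjPart hmu hj ((hle j hj).trans ((hlam (Nat.zero_le j)).trans hk))).symm
    _ ≤ stripShape r lam S j := conjPart_mono (fun c hc => by
        have : (conjPart r mu c : ℤ) ≤ stripConj r lam S ⟨c, hc⟩ := hS.2 ⟨c, hc⟩
        rw [dif_pos hc]
        omega) j

theorem skewCells_sdiff_stripShape (hlam : Antitone lam) (hmu : Antitone mu) (hk : lam 0 ≤ k)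
    (hS : Admissible r lam mu S) :
    skewCells r lam mu \ skewCells r (stripShape r lam S) mu = S.map (bottomCell r lam k) := by
  ext ⟨i, c⟩
  rw [mem_sdiff, mem_skewCells_iff_conjPart hlam hmu,
    mem_skewCells_iff_conjPart (stripShape_antitone r lam S) hmu, mem_map]
  simp only [bottomCell_apply, Prod.mk.injEq]
  constructor
  · rintro ⟨hp, hnp⟩
    have hck : c < k := ((lt_conjPart_iff hlam).1 hp.2).2.trans_le ((hlam (Nat.zero_le _)).trans hk)
    have h1 := hS.conjPart_stripShape ⟨c, hck⟩
    simp only [stripConj] at h1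
    by_cases hcS : (⟨c, hck⟩ : Fin k) ∈ S
    · rw [if_pos hcS] at h1
      exact ⟨⟨c, hck⟩, hcS, by simp only at hp hnp ⊢; omega, rfl⟩
    · rw [if_neg hcS] at h1
      omega
  · rintro ⟨d, hdS, rfl, rfl⟩
    have h1 := hS.conjPart_stripShape d
    have h2 := hS.2 d
    simp only [stripConj, if_pos hdS] at h1 h2
    omega

end Admissible

end Strip

section LargestLetter

variable {R : Type*} {n r k : ℕ} {lam mu : ℕ → ℕ}

def lastCols (T : {p // p ∈ skewCells r lam mu} → Fin (n + 1)) : Finset (Fin k) :=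
  univ.filter fun c => ∃ p, p.1.2 = (c : ℕ) ∧ T p = Fin.last n

theorem mem_lastCols {T : {p // p ∈ skewCells r lam mu} → Fin (n + 1)} {c : Fin k} :
    c ∈ lastCols T ↔ ∃ p, p.1.2 = (c : ℕ) ∧ T p = Fin.last n := by
  simp [lastCols]

namespace IsSSYT

variable {T : {p // p ∈ skewCells r lam mu} → Fin (n + 1)}

theorem conjPart_eq_succ_of_eq_last (hlam : Antitone lam) (hmu : Antitone mu)
    (hT : IsSSYT r lam mu T) {p : {p // p ∈ skewCells r lam mu}} (hp : T p = Fin.last n) :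
    conjPart r lam p.1.2 = p.1.1 + 1 := by
  have hcol := (mem_skewCells_iff_conjPart hlam hmu).1 p.2
  by_contra hne
  have hbelow : (p.1.1 + 1, p.1.2) ∈ skewCells r lam mu :=
    (mem_skewCells_iff_conjPart hlam hmu).2 ⟨by dsimp only; omega, by dsimp only; omega⟩
  have hlt := hT.2 p ⟨_, hbelow⟩ rfl rfl
  rw [hp] at hlt
  exact (Fin.le_last _).not_gt hlt

theorem admissible_lastCols (hlam : Antitone lam) (hmu : Antitone mu)
    (hle : ∀ j < r, mu j ≤ lam j) (hT : IsSSYT r lam mu T) :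
    Admissible r lam mu (lastCols (k := k) T) := by
  refine ⟨?_, fun c => ?_⟩
  · by_contra hna
    obtain ⟨c, d, hcd, hlt⟩ := Fin.exists_succ_lt_of_not_antitone hna
    have hcd' : (c : ℕ) ≤ d := by omega
    have hlam_cd := conjPart_antitone (r := r) lam hcd'
    simp only [stripConj] at hlt
    by_cases hc : c ∈ lastCols T <;> by_cases hd : d ∈ lastCols T <;>
      simp only [hc, hd, if_true, if_false] at hlt
    · omega
    · obtain ⟨p, hpc, hpl⟩ := mem_lastCols.1 hc
      have hbot := hT.conjPart_eq_succ_of_eq_last hlam hmu hpl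
      have hcol := (mem_skewCells_iff_conjPart hlam hmu).1 p.2
      have hmu_cd := conjPart_antitone (r := r) mu hcd'
      rw [hpc] at hbot hcol
      have hq : (p.1.1, (d : ℕ)) ∈ skewCells r lam mu :=
        (mem_skewCells_iff_conjPart hlam hmu).2 ⟨by dsimp only; omega, by dsimp only; omega⟩
      have hrow := hT.1 p ⟨_, hq⟩ rfl (by dsimp only; omega)
      rw [hpl, Fin.last_le_iff] at hrow
      exact hd (mem_lastCols.2 ⟨_, rfl, hrow⟩)
    · omega
    · omega
  · simp only [stripConj]
    split_ifs with hc
    · obtain ⟨p, hpc, hpl⟩ := mem_lastCols.1 hc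
      have hbot := hT.conjPart_eq_succ_of_eq_last hlam hmu hpl
      have hcol := ((mem_skewCells_iff_conjPart hlam hmu).1 p.2).1
      rw [hpc] at hbot hcol
      omega
    · have := conjPart_mono hle c
      omega

theorem eq_last_iff_notMem_stripShape (hlam : Antitone lam) (hmu : Antitone mu)
    (hle : ∀ j < r, mu j ≤ lam j) (hk : lam 0 ≤ k) (hT : IsSSYT r lam mu T)
    {S : Finset (Fin k)} (hS : lastCols T = S) (p : {p // p ∈ skewCells r lam mu}) :
    T p = Fin.last n ↔ p.1 ∉ skewCells r (stripShape r lam S) mu := by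
  have hadm : Admissible r lam mu S := hS ▸ hT.admissible_lastCols hlam hmu hle
  have hsdiff : p.1 ∉ skewCells r (stripShape r lam S) mu ↔
      p.1 ∈ skewCells r lam mu \ skewCells r (stripShape r lam S) mu := by
    rw [mem_sdiff]
    exact (and_iff_right p.2).symm
  rw [hsdiff, hadm.skewCells_sdiff_stripShape hlam hmu hk, mem_map]
  constructor
  · intro hpl
    refine ⟨⟨p.1.2, snd_lt_of_mem_skewCells hlam hk p.2⟩, hS ▸ mem_lastCols.2 ⟨p, rfl, hpl⟩, ?_⟩
    have := hT.conjPart_eq_succ_of_eq_last hlam hmu hpl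
    rw [bottomCell_apply]
    exact Prod.ext (by dsimp only; omega) rfl
  · rintro ⟨c, hc, hcp⟩
    obtain ⟨q, hqc, hql⟩ := mem_lastCols.1 (hS ▸ hc)
    have := hT.conjPart_eq_succ_of_eq_last hlam hmu hql
    rw [bottomCell_apply] at hcp
    rw [hqc] at this
    have hqp : q = p := Subtype.ext (by rw [← hcp]; ext <;> dsimp only <;> omega)
    rwa [← hqp]

end IsSSYT

theorem lastCols_extendByLast (hlam : Antitone lam) (hmu : Antitone mu) (hk : lam 0 ≤ k)
    {S : Finset (Fin k)} (hS : Admissible r lam mu S)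
    (T : {p // p ∈ skewCells r (stripShape r lam S) mu} → Fin n) :
    lastCols (extendByLast (lam := lam) T) = S := by
  have hsd := hS.skewCells_sdiff_stripShape hlam hmu hk
  ext c
  simp only [mem_lastCols, extendByLast_eq_last_iff]
  constructor
  · rintro ⟨p, hpc, hp⟩
    obtain ⟨d, hd, hdp⟩ := mem_map.1 (hsd ▸ mem_sdiff.2 ⟨p.2, hp⟩)
    rwa [show d = c from Fin.ext (by rw [← hpc, ← hdp, bottomCell_apply])] at hd
  · intro hc
    have hmem := hsd ▸ mem_map_of_mem (bottomCell r lam k) hc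
    exact ⟨⟨_, (mem_sdiff.1 hmem).1⟩, rfl, (mem_sdiff.1 hmem).2⟩

theorem sum_fiber_lastCols [CommSemiring R] (hlam : Antitone lam) (hmu : Antitone mu)
    (hle : ∀ j < r, mu j ≤ lam j) (hk : lam 0 ≤ k) {S : Finset (Fin k)}
    (hS : Admissible r lam mu S) (x : Fin (n + 1) → R) :
    ∑ T ∈ (univ.filter (IsSSYT r lam mu)).filter (fun T => lastCols T = S), ∏ p, x (T p) =
      x (Fin.last n) ^ S.card * skewSchurRows r (stripShape r lam S) mu (x ∘ Fin.castSucc) := by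
  have hsub := hS.skewCells_stripShape_subset hlam hmu
  rw [skewSchurRows, mul_sum]
  symm
  refine sum_nbij extendByLast (fun T hT => ?_) (fun T₁ _ T₂ _ h => ?_) (fun T hT => ?_)
    (fun T _ => ?_)
  · simp only [mem_filter, mem_univ, true_and] at hT ⊢
    exact ⟨isSSYT_extendByLast (stripShape_antitone r lam S) (hS.stripShape_strip hlam hk) hT,
      lastCols_extendByLast hlam hmu hk hS T⟩
  · funext q
    simpa [extendByLast, q.2] using congrFun h ⟨q.1, hsub q.2⟩
  · simp only [mem_coe, mem_filter, mem_univ, true_and] at hT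
    obtain ⟨hT, hTS⟩ := hT
    have hne (q : {p // p ∈ skewCells r (stripShape r lam S) mu}) :
        T ⟨q.1, hsub q.2⟩ ≠ Fin.last n :=
      fun h => (hT.eq_last_iff_notMem_stripShape hlam hmu hle hk hTS _).1 h q.2
    refine ⟨fun q => (T ⟨q.1, hsub q.2⟩).castPred (hne q), ?_, ?_⟩
    · simp only [mem_coe, mem_filter, mem_univ, true_and]
      exact hT.of_castSucc hsub fun q => Fin.castSucc_castPred _ _
    · funext p
      simp only [extendByLast]
      split_ifs with h
      · exact Fin.castSucc_castPred _ _
      · exact ((hT.eq_last_iff_notMem_stripShape hlam hmu hle hk hTS p).2 h).symm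
  · rw [prod_extendByLast hsub, hS.skewCells_sdiff_stripShape hlam hmu hk, card_map]
    rfl

theorem skewSchurRows_succ [CommSemiring R] (hlam : Antitone lam) (hmu : Antitone mu)
    (hle : ∀ j < r, mu j ≤ lam j) (hk : lam 0 ≤ k) (x : Fin (n + 1) → R) :
    skewSchurRows r lam mu x = ∑ S ∈ univ.filter (Admissible r lam mu (k := k)),
      x (Fin.last n) ^ S.card * skewSchurRows r (stripShape r lam S) mu (x ∘ Fin.castSucc) := by
  rw [skewSchurRows, ← sum_fiberwise _ (lastCols (k := k)), sum_filter]
  refine sum_congr rfl fun S _ => ?_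
  split_ifs with hS
  · exact sum_fiber_lastCols hlam hmu hle hk hS x
  · refine sum_eq_zero fun T hT => absurd ?_ hS
    obtain ⟨hT, hTS⟩ := mem_filter.1 hT
    exact hTS ▸ (mem_filter.1 hT).2.admissible_lastCols hlam hmu hle

end LargestLetter

section DualJacobiTrudi

variable {R : Type*} [CommRing R] {r k : ℕ} {lam mu : ℕ → ℕ}

theorem skewSchurRows_fin_zero_eq_det (hlam : Antitone lam) (hmu : Antitone mu)
    (hle : ∀ j < r, mu j ≤ lam j) (hk : lam 0 ≤ k) (x : Fin 0 → R) :
    skewSchurRows r lam mu x = (jacobiTrudi 0 (fun i : Fin k => (conjPart r lam i : ℤ))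
      (fun j => (conjPart r mu j : ℤ)) x).det := by
  by_cases h : skewCells r lam mu = ∅
  · have heq : conjPart r lam = conjPart r mu := conjPart_congr fun j hj => by
      by_contra hne
      have hcell : (j, mu j) ∈ skewCells r lam mu :=
        mem_skewCells.2 ⟨hj, le_rfl, lt_of_le_of_ne (hle j hj) (Ne.symm hne)⟩
      simp [h] at hcell
    rw [skewSchurRows_of_skewCells_eq_empty h, heq,
      det_jacobiTrudi_self (antitone_conjPart_cast mu)]
  · obtain ⟨p, hp⟩ := nonempty_iff_ne_empty.2 h
    have hcol := (mem_skewCells_iff_conjPart hlam hmu).1 hp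
    rw [skewSchurRows_fin_zero_of_mem hp, det_jacobiTrudi_fin_zero_eq_zero
      (antitone_conjPart_cast lam) (antitone_conjPart_cast mu)
      (t := ⟨p.2, snd_lt_of_mem_skewCells hlam hk hp⟩) (by dsimp only; omega)]

theorem skewSchurRows_eq_det_jacobiTrudi (hlam : Antitone lam) (hmu : Antitone mu)
    (hle : ∀ j < r, mu j ≤ lam j) (hk : lam 0 ≤ k) {n : ℕ} (x : Fin n → R) :
    skewSchurRows r lam mu x = (jacobiTrudi n (fun i : Fin k => (conjPart r lam i : ℤ))
      (fun j => (conjPart r mu j : ℤ)) x).det := by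
  induction n generalizing lam with
  | zero => exact skewSchurRows_fin_zero_eq_det hlam hmu hle hk x
  | succ n ih =>
    set b : Fin k → ℤ := fun j => conjPart r mu j
    calc skewSchurRows r lam mu x
        = ∑ S ∈ univ.filter (Admissible r lam mu), x (Fin.last n) ^ S.card *
            skewSchurRows r (stripShape r lam S) mu (x ∘ Fin.castSucc) :=
          skewSchurRows_succ hlam hmu hle hk x
      _ = ∑ S ∈ univ.filter (Admissible r lam mu), x (Fin.last n) ^ S.card *
            (jacobiTrudi n (stripConj r lam S) b (x ∘ Fin.castSucc)).det := by
          refine sum_congr rfl fun S hS => ?_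
          have hS := (mem_filter.1 hS).2
          rw [ih (stripShape_antitone r lam S) (hS.le_stripShape hlam hmu hle hk)
            (stripShape_zero_le r lam S), funext hS.conjPart_stripShape]
      _ = ∑ S, x (Fin.last n) ^ S.card *
            (jacobiTrudi n (stripConj r lam S) b (x ∘ Fin.castSucc)).det :=
          sum_filter_of_ne fun S _ h => antitone_and_le_of_det_jacobiTrudi_ne_zero
            (antitone_conjPart_cast lam) (antitone_conjPart_cast mu) (right_ne_zero_of_mul h)
      _ = _ := (det_jacobiTrudi_succ _ b x).symm

end DualJacobiTrudi

theorem skewSchur_eq_det_esym_general {R : Type*} [CommRing R] (n : ℕ) (x : Fin n → R)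
    (lam mu : ℕ → ℕ) (hlam : Antitone lam) (hmu : Antitone mu) (hle : mu ≤ lam)
    (k : ℕ) (hk : lam 0 ≤ k) :
    skewSchur n lam mu x =
      (Matrix.of fun i j : Fin k =>
        esymValZ n ((conjPart n lam i : ℤ) - conjPart n mu j - i + j) x).det :=
  skewSchurRows_eq_det_jacobiTrudi hlam hmu (fun j _ => hle j) hk x

/-- Dual Jacobi–Trudi identity: for partitions `mu ⊆ lam` with at most `n` parts whose
conjugates have at most `k` parts,
`S_{lam/mu}(x 1, ..., x n) = det( e_{lam'_i - mu'_j - i + j} )_{1 ≤ i, j ≤ k}`. -/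
theorem skewSchur_eq_det_esym {R : Type*} [CommRing R] (n : ℕ) (x : Fin n → R)
    (lam mu : ℕ → ℕ) (hlam : Antitone lam) (hmu : Antitone mu) (hle : mu ≤ lam)
    (hn : ∀ i, n ≤ i → lam i = 0) (k : ℕ) (hk : lam 0 ≤ k) :
    skewSchur n lam mu x =
      (Matrix.of fun i j : Fin k =>
        esymValZ n ((conjPart n lam i : ℤ) - conjPart n mu j - i + j) x).det :=
  skewSchur_eq_det_esym_general n x lam mu hlam hmu hle k hk
end

section
/- For n = 2 variables, the skew Schur polynomials f(k) = S_{(k,k)/(k)}(x1,x2) (shape two rows of length k, skewed by one row of length k, i.e. a single row of k boxes shifted) satisfy f(k) = h_k-type recurrence: f(k+2) = (x1+x2) f(k+1) - x1 x2 f(k) for k ≥ 1, but this recurrence fails at k = 0; concretely, with P_k = det of the k×k Toeplitz matrix obtained from the 2-banded Toeplitz matrix (s_{j-i}) by deleting column 2, one has x1x2·P_0 - (x1+x2)P_1 + P_2 ≠ 0 while x1x2·P_1 - (x1+x2)P_2 + P_3 = 0 (as polynomials in x1, x2). -/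
/-- The elementary symmetric polynomials in two variables as the symbol of a 2-banded
Toeplitz matrix: `s 0 = 1`, `s 1 = x1 + x2`, `s 2 = x1 x2`, else `0`. -/
noncomputable def symb2 : ℤ → MvPolynomial (Fin 2) ℤ :=
  fun i => if i = 0 then 1 else if i = 1 then MvPolynomial.X 0 + MvPolynomial.X 1
    else if i = 2 then MvPolynomial.X 0 * MvPolynomial.X 1 else 0

/-- `P k`: the determinant of the leading `k × k` submatrix of the infinite Toeplitz
matrix `(s_{j-i})` after deleting its second column (kept columns `1, 3, 4, 5, ...`,
written `0`-indexed as `0, 2, 3, 4, ...`). -/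
noncomputable def delCol2Det (k : ℕ) : MvPolynomial (Fin 2) ℤ :=
  (Matrix.of fun i j : Fin k =>
    symb2 ((if (j : ℕ) = 0 then 0 else (j : ℤ) + 1) - (i : ℤ))).det


/-!
The skew shape `(k, k)/(k)` is a single row of `k` boxes. A semistandard filling of a row with
entries in `{1, 2}` is a monotone map, hence determined by its number `j` of ones, so
`f(k) = h_k(x₁, x₂) = ∑ⱼ x₁ʲ x₂ᵏ⁻ʲ`. Splitting off the `j = 0` term gives
`h_{k+1} = x₁ h_k + x₂^{k+1}`, and the three-term recurrence follows for every `k`.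
The minors are `P₀ = P₁ = 1`, `P₂ = s₁` and `P₃ = s₁² - s₂`, i.e. `P_{k+1} = h_k` for `k ≤ 2`;
but `P₀ = 1` is not `h_{-1} = 0`, and the recurrence at `k = 0` is off by `x₁x₂`.
-/

open Finset

section CompleteHomogeneous

variable {R : Type*}

def completeHomogeneous₂ [CommSemiring R] (x y : R) (m : ℕ) : R :=
  ∑ j ∈ range (m + 1), x ^ j * y ^ (m - j)

theorem completeHomogeneous₂_succ [CommSemiring R] (x y : R) (m : ℕ) :
    completeHomogeneous₂ x y (m + 1) = x * completeHomogeneous₂ x y m + y ^ (m + 1) := by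
  simp only [completeHomogeneous₂, sum_range_succ' _ (m + 1), Nat.add_sub_add_right, pow_succ',
    mul_assoc, mul_sum, pow_zero, one_mul, Nat.sub_zero]

theorem completeHomogeneous₂_add_two [CommRing R] (x y : R) (m : ℕ) :
    completeHomogeneous₂ x y (m + 2) =
      (x + y) * completeHomogeneous₂ x y (m + 1) - x * y * completeHomogeneous₂ x y m := by
  linear_combination completeHomogeneous₂_succ x y (m + 1) - y * completeHomogeneous₂_succ x y m

end CompleteHomogeneous

namespace Fin

def threshold {m : ℕ} (j : ℕ) (i : Fin m) : Fin 2 := if (i : ℕ) < j then 0 else 1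

theorem monotone_threshold (m j : ℕ) : Monotone (threshold (m := m) j) := by
  intro a b hab
  have : (a : ℕ) ≤ b := hab
  simp only [threshold]
  split_ifs <;> first | decide | omega

theorem threshold_injOn (m : ℕ) :
    Set.InjOn (threshold (m := m)) (Finset.range (m + 1) : Set ℕ) := by
  intro a ha b hb hab
  simp only [coe_range, Set.mem_Iio] at ha hb
  have ne_of_lt {a b : ℕ} (hab : a < b) (hb : b < m + 1) :
      threshold (m := m) a ≠ threshold b := fun h => by
    simpa [threshold, hab] using congrFun h ⟨a, by omega⟩
  rcases lt_trichotomy a b with h | h | h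
  · exact absurd hab (ne_of_lt h hb)
  · exact h
  · exact absurd hab.symm (ne_of_lt h ha)

theorem exists_eq_threshold_of_monotone {m : ℕ} {f : Fin m → Fin 2} (hf : Monotone f) :
    ∃ j ≤ m, f = threshold j := by
  have hzero : IsLowerSet {i | f i = 0} := fun a b hba ha =>
    Fin.le_zero_iff.1 (ha ▸ hf hba)
  have hone {i : Fin m} (h : f i ≠ 0) : f i = 1 := by omega
  rcases hzero.eq_univ_or_Iio with hall | ⟨b, hb⟩
  · refine ⟨m, le_rfl, funext fun i => ?_⟩
    have : f i = 0 := (Set.eq_univ_iff_forall.1 hall) i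
    simp [threshold, this]
  · refine ⟨b, b.2.le, funext fun i => ?_⟩
    have hi : f i = 0 ↔ i < b := Set.ext_iff.1 hb i
    by_cases h : i < b
    · simp [threshold, hi.2 h, Fin.lt_def.1 h]
    · simp [threshold, hone (mt hi.1 h), Fin.lt_def.not.1 h]

theorem prod_threshold {M : Type*} [CommMonoid M] (x : Fin 2 → M) {m j : ℕ} (hj : j ≤ m) :
    ∏ i : Fin m, x (threshold j i) = x 0 ^ j * x 1 ^ (m - j) := by
  have below : ∏ i ∈ range j, x (if i < j then 0 else 1) = ∏ _i ∈ range j, x 0 :=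
    prod_congr rfl fun i hi => by rw [if_pos (mem_range.1 hi)]
  have above : ∏ i ∈ Ico j m, x (if i < j then 0 else 1) = ∏ _i ∈ Ico j m, x 1 :=
    prod_congr rfl fun i hi => by rw [if_neg (not_lt.2 (mem_Ico.1 hi).1)]
  simp only [threshold]
  rw [prod_univ_eq_prod_range (fun i => x (if i < j then 0 else 1)),
    ← prod_range_mul_prod_Ico _ hj, below, above]
  simp

theorem sum_monotone_prod_eq_completeHomogeneous₂ {R : Type*} [CommSemiring R]
    (x : Fin 2 → R) (m : ℕ) :
    ∑ f ∈ univ.filter (fun f : Fin m → Fin 2 => Monotone f), ∏ i, x (f i) =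
      completeHomogeneous₂ (x 0) (x 1) m := by
  refine (sum_nbij threshold (fun j _ => by simpa using monotone_threshold m j)
    (threshold_injOn m) (fun f hf => ?_) (fun j hj => (prod_threshold x ?_).symm)).symm
  · obtain ⟨j, hj, rfl⟩ := exists_eq_threshold_of_monotone (by simpa using hf)
    exact ⟨j, by simpa [Nat.lt_succ_iff] using hj, rfl⟩
  · simpa [Nat.lt_succ_iff] using hj

end Fin

abbrev twoRowShape (m : ℕ) : ℕ → ℕ := fun i => if i < 2 then m else 0

abbrev oneRowShape (m : ℕ) : ℕ → ℕ := fun i => if i < 1 then m else 0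

theorem mem_skewCells_twoRowShape_oneRowShape {m : ℕ} {p : ℕ × ℕ} :
    p ∈ skewCells 2 (twoRowShape m) (oneRowShape m) ↔ p.1 = 1 ∧ p.2 < m := by
  have hsup : (range 2).sup (twoRowShape m) = m := by
    simp [range_add_one, twoRowShape]
  rw [skewCells, hsup]
  simp only [twoRowShape, oneRowShape, mem_filter, mem_product, mem_range]
  constructor
  · rintro ⟨⟨h1, h2⟩, h3, h4⟩
    split_ifs at h3 h4 <;> omega
  · rintro ⟨h1, h2⟩
    simp [h1, h2]

def skewRowCellEquiv (m : ℕ) :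
    {p // p ∈ skewCells 2 (twoRowShape m) (oneRowShape m)} ≃ Fin m where
  toFun c := ⟨c.1.2, (mem_skewCells_twoRowShape_oneRowShape.1 c.2).2⟩
  invFun j := ⟨(1, j), mem_skewCells_twoRowShape_oneRowShape.2 ⟨rfl, j.2⟩⟩
  left_inv c := Subtype.ext (Prod.ext (mem_skewCells_twoRowShape_oneRowShape.1 c.2).1.symm rfl)
  right_inv _ := rfl

theorem isSSYTFilling_iff_monotone {m : ℕ}
    (T : {p // p ∈ skewCells 2 (twoRowShape m) (oneRowShape m)} → Fin 2) :
    IsSSYTFilling 2 (twoRowShape m) (oneRowShape m) T ↔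
      Monotone (T ∘ (skewRowCellEquiv m).symm) := by
  have row (c : {p // p ∈ skewCells 2 (twoRowShape m) (oneRowShape m)}) : c.1.1 = 1 :=
    (mem_skewCells_twoRowShape_oneRowShape.1 c.2).1
  constructor
  · intro hT
    cases m with
    | zero => exact fun i => i.elim0
    | succ m => exact Fin.monotone_iff_le_succ.2 fun i => hT.1 _ _ rfl rfl
  · intro hT
    refine ⟨fun a b _ hcol => ?_, fun a b hrow _ => absurd hrow (by rw [row a, row b]; omega)⟩
    simpa using hT (a := skewRowCellEquiv m a) (b := skewRowCellEquiv m b)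
      (Fin.le_def.2 (by simp [skewRowCellEquiv]; omega))

theorem skewSchur_twoRowShape_oneRowShape {R : Type*} [CommSemiring R] (x : Fin 2 → R)
    (m : ℕ) :
    skewSchur 2 (twoRowShape m) (oneRowShape m) x = completeHomogeneous₂ (x 0) (x 1) m := by
  rw [← Fin.sum_monotone_prod_eq_completeHomogeneous₂, skewSchur]
  refine sum_equiv ((skewRowCellEquiv m).arrowCongr (Equiv.refl _)) (fun T => ?_) (fun T _ => ?_)
  · simp only [isSSYTFilling_iff_monotone, mem_filter, mem_univ, true_and]; rfl
  · exact ((skewRowCellEquiv m).symm.prod_comp _).symm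

section Minors

open MvPolynomial

theorem delCol2Det_zero : delCol2Det 0 = 1 := by
  simp [delCol2Det]

theorem delCol2Det_one : delCol2Det 1 = 1 := by
  simp [delCol2Det, symb2]

theorem delCol2Det_two : delCol2Det 2 = X 0 + X 1 := by
  simp [delCol2Det, Matrix.det_fin_two, symb2]

theorem delCol2Det_three : delCol2Det 3 = (X 0 + X 1) ^ 2 - X 0 * X 1 := by
  simp [delCol2Det, Matrix.det_fin_three, symb2, sq]

end Minors

/-- The skew Schur polynomials `f(k) = S_{(k,k)/(k)}(x1,x2)` satisfy the three-term
recurrence `f(k+2) = (x1+x2) f(k+1) - x1 x2 f(k)` for `k ≥ 1`; the corresponding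
recurrence for the Toeplitz minors `P_k` (delete column 2) fails at the initial index:
`x1x2·P_0 - (x1+x2) P_1 + P_2 ≠ 0`, while `x1x2·P_1 - (x1+x2) P_2 + P_3 = 0`,
as polynomials in `x1, x2`. -/
theorem recurrence_threshold_necessary :
    (∀ k : ℕ, 1 ≤ k →
      skewSchur 2 (fun i => if i < 2 then k + 2 else 0)
          (fun i => if i < 1 then k + 2 else 0) (MvPolynomial.X : Fin 2 → MvPolynomial (Fin 2) ℤ) =
        (MvPolynomial.X 0 + MvPolynomial.X 1) *
            skewSchur 2 (fun i => if i < 2 then k + 1 else 0)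
              (fun i => if i < 1 then k + 1 else 0) (MvPolynomial.X : Fin 2 → MvPolynomial (Fin 2) ℤ) -
          MvPolynomial.X 0 * MvPolynomial.X 1 *
            skewSchur 2 (fun i => if i < 2 then k else 0)
              (fun i => if i < 1 then k else 0) (MvPolynomial.X : Fin 2 → MvPolynomial (Fin 2) ℤ)) ∧
    MvPolynomial.X 0 * MvPolynomial.X 1 * delCol2Det 0 -
        (MvPolynomial.X 0 + MvPolynomial.X 1) * delCol2Det 1 + delCol2Det 2 ≠ 0 ∧
    MvPolynomial.X 0 * MvPolynomial.X 1 * delCol2Det 1 -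
        (MvPolynomial.X 0 + MvPolynomial.X 1) * delCol2Det 2 + delCol2Det 3 = 0 := by
  refine ⟨fun k _ => ?_, ?_, ?_⟩
  · simp only [skewSchur_twoRowShape_oneRowShape]
    exact completeHomogeneous₂_add_two _ _ k
  · rw [delCol2Det_zero, delCol2Det_one, delCol2Det_two, mul_one, mul_one, sub_add_cancel]
    exact mul_ne_zero (MvPolynomial.X_ne_zero 0) (MvPolynomial.X_ne_zero 1)
  · rw [delCol2Det_one, delCol2Det_two, delCol2Det_three]
    ring
end

section
/- For the partition λ = (k, k) in n = 3 variables, the Schur polynomials f(k) = S_{(k,k)}(x1,x2,x3) satisfy the length-3 recurrence f(k+3) = (x1x2 + x1x3 + x2x3) f(k+2) - (x1x2·x1x3 + x1x2·x2x3 + x1x3·x2x3) f(k+1) + (x1x2x3)² f(k) for all k ≥ 0. -/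
/-!
In a semistandard filling of the two-row rectangle `(m, m)` with entries `0, 1, 2`, every column
is `(0, 1)`, `(0, 2)` or `(1, 2)`, and weak increase along the rows forces the columns to occur in
this order. So the filling is determined by how many columns of each kind it has, and
`S_{(m,m)}(x₀, x₁, x₂) = h_m(x₀x₁, x₀x₂, x₁x₂)`, the complete homogeneous symmetric polynomial in
the pairwise products. The sequence `h_m(u, v, w)` satisfies the linear recurrence with
characteristic polynomial `(t - u)(t - v)(t - w)`, since its generating function is
`1 / ((1 - u t)(1 - v t)(1 - w t))`.
-/

open Finset

section CompleteHomogeneous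
variable {R : Type*}

def completeHomog₂ [CommSemiring R] (u v : R) (a : ℕ) : R :=
  ∑ b ∈ range (a + 1), u ^ b * v ^ (a - b)

def completeHomog₃ [CommSemiring R] (u v w : R) (m : ℕ) : R :=
  ∑ a ∈ range (m + 1), completeHomog₂ u v a * w ^ (m - a)

theorem completeHomog₂_succ [CommSemiring R] (u v : R) (a : ℕ) :
    completeHomog₂ u v (a + 1) = v * completeHomog₂ u v a + u ^ (a + 1) := by
  rw [completeHomog₂, sum_range_succ, Nat.sub_self, pow_zero, mul_one, completeHomog₂, mul_sum]
  congr 1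
  refine sum_congr rfl fun b hb => ?_
  rw [Nat.sub_add_comm (mem_range_succ_iff.mp hb), pow_succ]
  ring

theorem completeHomog₃_succ [CommSemiring R] (u v w : R) (m : ℕ) :
    completeHomog₃ u v w (m + 1) = w * completeHomog₃ u v w m + completeHomog₂ u v (m + 1) := by
  rw [completeHomog₃, sum_range_succ, Nat.sub_self, pow_zero, mul_one, completeHomog₃, mul_sum]
  congr 1
  refine sum_congr rfl fun a ha => ?_
  rw [Nat.sub_add_comm (mem_range_succ_iff.mp ha), pow_succ]
  ring

theorem completeHomog₃_add_three [CommRing R] (u v w : R) (m : ℕ) :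
    completeHomog₃ u v w (m + 3) = (u + v + w) * completeHomog₃ u v w (m + 2)
      - (u * v + u * w + v * w) * completeHomog₃ u v w (m + 1)
      + u * v * w * completeHomog₃ u v w m := by
  linear_combination completeHomog₃_succ u v w (m + 2) + completeHomog₂_succ u v (m + 2)
    - (u + v) * completeHomog₃_succ u v w (m + 1) - u * completeHomog₂_succ u v (m + 1)
    + u * v * completeHomog₃_succ u v w m

end CompleteHomogeneous

theorem lt_card_filter_range_iff {m j : ℕ} {P : ℕ → Prop} [DecidablePred P]
    (hP : ∀ i i', i ≤ i' → i' < m → P i' → P i) (hj : j < m) :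
    j < #{i ∈ range m | P i} ↔ P j := by
  constructor
  · intro hlt
    by_contra hPj
    have hsub : {i ∈ range m | P i} ⊆ range j := fun i hi => by
      rw [mem_filter, mem_range] at hi
      exact mem_range.mpr (lt_of_not_ge fun hji => hPj (hP j i hji hi.1 hi.2))
    exact absurd (card_le_card hsub) (by rw [card_range]; omega)
  · intro hPj
    have hsub : range (j + 1) ⊆ {i ∈ range m | P i} := fun i hi => by
      rw [mem_range_succ_iff] at hi
      exact mem_filter.mpr ⟨mem_range.mpr (by omega), hP i j hi hj hPj⟩
    simpa using card_le_card hsub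

theorem card_filter_range_lt {m a : ℕ} (ha : a ≤ m) : #{j ∈ range m | j < a} = a := by
  rw [show {j ∈ range m | j < a} = range a by ext; simp; omega, card_range]

theorem prod_range_ite_lt {M : Type*} [CommMonoid M] (y z : M) {a m : ℕ} (ha : a ≤ m) :
    ∏ j ∈ range m, (if j < a then y else z) = y ^ a * z ^ (m - a) := by
  rw [prod_ite, prod_const, prod_const, filter_not, card_sdiff_of_subset (filter_subset _ _),
    card_range, card_filter_range_lt ha]

def twoRow (m : ℕ) : ℕ → ℕ := fun i => if i < 2 then m else 0

theorem skewCells_twoRow (m : ℕ) :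
    skewCells 3 (twoRow m) (fun _ => 0) = range 2 ×ˢ range m := by
  have hsup : (range 3).sup (twoRow m) = m := by
    simp [show range 3 = {0, 1, 2} by decide, twoRow]
  ext ⟨i, j⟩
  simp only [skewCells, hsup, mem_filter, mem_product, mem_range, twoRow]
  split_ifs <;> omega

theorem mem_skewCells_twoRow {m : ℕ} {p : ℕ × ℕ} :
    p ∈ skewCells 3 (twoRow m) (fun _ => 0) ↔ p.1 < 2 ∧ p.2 < m := by
  rw [skewCells_twoRow, mem_product, mem_range, mem_range]

abbrev TwoRowCell (m : ℕ) := {p // p ∈ skewCells 3 (twoRow m) (fun _ => 0)}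

namespace TwoRowCell

variable {m : ℕ}

/-- Row `i`, column `j`; `0` outside the diagram. -/
def entry (T : TwoRowCell m → Fin 3) (i j : ℕ) : Fin 3 :=
  if h : (i, j) ∈ skewCells 3 (twoRow m) (fun _ => 0) then T ⟨(i, j), h⟩ else 0

theorem entry_coe (T : TwoRowCell m → Fin 3) (c : TwoRowCell m) : entry T c.1.1 c.1.2 = T c :=
  dif_pos c.2

theorem entry_of_mem (T : TwoRowCell m → Fin 3) {i j : ℕ} (hi : i < 2) (hj : j < m) :
    entry T i j = T ⟨(i, j), mem_skewCells_twoRow.mpr ⟨hi, hj⟩⟩ :=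
  dif_pos _

def zeroCount (T : TwoRowCell m → Fin 3) : ℕ := #{j ∈ range m | entry T 0 j = 0}

def oneCount (T : TwoRowCell m → Fin 3) : ℕ := #{j ∈ range m | entry T 1 j = 1}

theorem zeroCount_le (T : TwoRowCell m → Fin 3) : zeroCount T ≤ m :=
  (card_filter_le _ _).trans_eq (card_range m)

theorem oneCount_le (T : TwoRowCell m → Fin 3) : oneCount T ≤ m :=
  (card_filter_le _ _).trans_eq (card_range m)

section Semistandard

variable {T : TwoRowCell m → Fin 3} (hT : IsSSYTFilling 3 (twoRow m) (fun _ => 0) T)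
include hT

theorem entry_mono {i j j' : ℕ} (hi : i < 2) (hjj' : j ≤ j') (hj' : j' < m) :
    entry T i j ≤ entry T i j' := by
  induction j', hjj' using Nat.le_induction with
  | base => exact le_rfl
  | succ j' _ ih =>
    refine (ih (by omega)).trans ?_
    rw [entry_of_mem T hi (by omega), entry_of_mem T hi hj']
    exact hT.1 _ _ rfl rfl

theorem entry_top_lt_bottom {j : ℕ} (hj : j < m) : entry T 0 j < entry T 1 j := by
  rw [entry_of_mem T (by omega) hj, entry_of_mem T (by omega) hj]
  exact hT.2 _ _ rfl rfl

/-- Strict columns keep `2` out of the top row, and weak rows put its `0`s before its `1`s. -/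
theorem entry_top {j : ℕ} (hj : j < m) : entry T 0 j = if j < zeroCount T then 0 else 1 := by
  have hcount : j < zeroCount T ↔ entry T 0 j = 0 :=
    lt_card_filter_range_iff (fun i i' hii' hi' h => by
      have := entry_mono hT (i := 0) (by omega) hii' hi'; omega) hj
  have := entry_top_lt_bottom hT hj
  split_ifs <;> omega

theorem entry_bottom {j : ℕ} (hj : j < m) : entry T 1 j = if j < oneCount T then 1 else 2 := by
  have hpos : ∀ j < m, entry T 1 j ≠ 0 := fun j hj => by
    have := entry_top_lt_bottom hT hj; omega
  have hcount : j < oneCount T ↔ entry T 1 j = 1 :=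
    lt_card_filter_range_iff (fun i i' hii' hi' h => by
      have := entry_mono hT (i := 1) (by omega) hii' hi'
      have := hpos i (by omega); omega) hj
  have := hpos j hj
  split_ifs <;> omega

theorem oneCount_le_zeroCount : oneCount T ≤ zeroCount T := by
  by_contra! h
  have hj : zeroCount T < m := h.trans_le (oneCount_le T)
  have hlt := entry_top_lt_bottom hT hj
  rw [entry_top hT hj, entry_bottom hT hj] at hlt
  simp [h] at hlt

end Semistandard

def countsFilling (a b : ℕ) (p : ℕ × ℕ) : Fin 3 :=
  if p.1 = 0 then (if p.2 < a then 0 else 1) else (if p.2 < b then 1 else 2)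

def ofCounts (a b : ℕ) : TwoRowCell m → Fin 3 := fun c => countsFilling a b c.1

theorem eq_ofCounts {T : TwoRowCell m → Fin 3}
    (hT : IsSSYTFilling 3 (twoRow m) (fun _ => 0) T) :
    T = ofCounts (zeroCount T) (oneCount T) := by
  funext ⟨⟨i, j⟩, hc⟩
  obtain ⟨hi, hj⟩ := mem_skewCells_twoRow.mp hc
  rw [← entry_coe T]
  interval_cases i
  · exact entry_top hT hj
  · exact entry_bottom hT hj

theorem isSSYTFilling_ofCounts {a b : ℕ} (hba : b ≤ a) :
    IsSSYTFilling 3 (twoRow m) (fun _ => 0) (ofCounts a b) := by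
  refine ⟨fun ⟨⟨i, j⟩, _⟩ ⟨⟨i', j'⟩, _⟩ hrow hcol => ?_,
    fun ⟨⟨i, j⟩, _⟩ ⟨⟨i', j'⟩, hc'⟩ hrow hcol => ?_⟩
  · simp only at hrow hcol
    simp only [ofCounts, countsFilling, hrow]
    split_ifs <;> omega
  · have := (mem_skewCells_twoRow.mp hc').1
    simp only at hrow hcol
    simp only [ofCounts, countsFilling]
    split_ifs <;> omega

theorem zeroCount_ofCounts {a b : ℕ} (ham : a ≤ m) : zeroCount (ofCounts (m := m) a b) = a := by
  refine (congrArg card (filter_congr fun j hj => ?_)).trans (card_filter_range_lt ham)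
  rw [entry_of_mem _ (by omega) (mem_range.mp hj), ofCounts, countsFilling]
  split_ifs <;> simp_all

theorem oneCount_ofCounts {a b : ℕ} (hbm : b ≤ m) : oneCount (ofCounts (m := m) a b) = b := by
  refine (congrArg card (filter_congr fun j hj => ?_)).trans (card_filter_range_lt hbm)
  rw [entry_of_mem _ (by omega) (mem_range.mp hj), ofCounts, countsFilling]
  split_ifs <;> simp_all

theorem prod_ofCounts {M : Type*} [CommMonoid M] (x : Fin 3 → M) {a b : ℕ} (hba : b ≤ a)
    (ham : a ≤ m) :
    ∏ c : TwoRowCell m, x (ofCounts a b c) =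
      (x 0 * x 1) ^ b * (x 0 * x 2) ^ (a - b) * (x 1 * x 2) ^ (m - a) := by
  have hcells : ∏ c : TwoRowCell m, x (ofCounts a b c) =
      ∏ p ∈ range 2 ×ˢ range m, x (countsFilling a b p) := by
    rw [← skewCells_twoRow]
    exact prod_coe_sort _ (x ∘ countsFilling a b)
  rw [hcells, prod_product, prod_range_succ, prod_range_one]
  simp only [countsFilling, if_true, one_ne_zero, if_false, apply_ite x]
  rw [prod_range_ite_lt _ _ ham, prod_range_ite_lt _ _ (hba.trans ham)]
  obtain ⟨c, rfl⟩ := Nat.exists_eq_add_of_le hba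
  obtain ⟨d, rfl⟩ := Nat.exists_eq_add_of_le ham
  rw [Nat.add_sub_cancel_left, Nat.add_sub_cancel_left, add_assoc, Nat.add_sub_cancel_left]
  simp only [mul_pow, pow_add]
  ac_rfl

end TwoRowCell

open TwoRowCell in
theorem skewSchur_twoRow {R : Type*} [CommSemiring R] (x : Fin 3 → R) (m : ℕ) :
    skewSchur 3 (twoRow m) (fun _ => 0) x =
      completeHomog₃ (x 0 * x 1) (x 0 * x 2) (x 1 * x 2) m := by
  simp only [completeHomog₃, completeHomog₂, sum_mul]
  rw [sum_sigma']
  refine sum_nbij' (fun T => ⟨zeroCount T, oneCount T⟩) (fun p => ofCounts p.1 p.2)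
    ?_ ?_ ?_ ?_ ?_
  all_goals simp only [mem_filter, mem_univ, true_and, mem_sigma, mem_range]
  · intro T hT
    exact ⟨Nat.lt_succ_of_le (zeroCount_le T), Nat.lt_succ_of_le (oneCount_le_zeroCount hT)⟩
  · intro p hp
    exact isSSYTFilling_ofCounts (by omega)
  · intro T hT
    exact (eq_ofCounts hT).symm
  · intro p hp
    rw [zeroCount_ofCounts (by omega), oneCount_ofCounts (by omega)]
  · intro T hT
    conv_lhs => rw [eq_ofCounts hT]
    exact prod_ofCounts x (oneCount_le_zeroCount hT) (zeroCount_le T)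

/-- For `λ = (k, k)` in `n = 3` variables, the Schur polynomials
`f(k) = S_{(k,k)}(x1,x2,x3)` satisfy the length-3 linear recurrence with characteristic
polynomial `Π_{1≤i<j≤3} (t - x_i x_j)`:
`f(k+3) = e₁' f(k+2) - e₂' f(k+1) + (x1x2x3)² f(k)` where `e₁', e₂'` are the elementary
symmetric polynomials in the three pairwise products `x_i x_j`. -/
theorem two_row_schur_recurrence_three_vars {R : Type*} [CommRing R]
    (x1 x2 x3 : R) (k : ℕ) :
    skewSchur 3 (fun i => if i < 2 then k + 3 else 0) (fun _ => 0) ![x1, x2, x3] =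
      (x1 * x2 + x1 * x3 + x2 * x3) *
          skewSchur 3 (fun i => if i < 2 then k + 2 else 0) (fun _ => 0) ![x1, x2, x3] -
        (x1 * x2 * (x1 * x3) + x1 * x2 * (x2 * x3) + x1 * x3 * (x2 * x3)) *
          skewSchur 3 (fun i => if i < 2 then k + 1 else 0) (fun _ => 0) ![x1, x2, x3] +
        (x1 * x2 * x3) ^ 2 *
          skewSchur 3 (fun i => if i < 2 then k else 0) (fun _ => 0) ![x1, x2, x3] := by
  have hschur (m : ℕ) :
      skewSchur 3 (fun i => if i < 2 then m else 0) (fun _ => 0) ![x1, x2, x3] =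
        completeHomog₃ (x1 * x2) (x1 * x3) (x2 * x3) m :=
    skewSchur_twoRow ![x1, x2, x3] m
  rw [hschur, hschur, hschur, hschur]
  linear_combination completeHomog₃_add_three (x1 * x2) (x1 * x3) (x2 * x3) k
end

section
/- Widom's determinant formula: let s_0 = 1, s_1, ..., s_n be complex numbers with s_n ≠ 0, ψ(t) = Σ_{i=0}^n s_i t^i with distinct roots t_1,...,t_n, and let D_c^k be the leading k×k submatrix of the Toeplitz matrix (s_{j-i}) after deleting the first c columns (0 ≤ c ≤ n). Then for all k ≥ 1, det D_c^k = Σ_{σ ⊆ [n], |σ|=n-c} C_σ w_σ^k, where w_σ = (-1)^{n-c} s_n Π_{i∈σ} t_i and C_σ = Π_{i∈σ} t_i^c · Π_{j∈σ, i∉σ} (t_j - t_i)^{-1}. -/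
/-!
Let `P` be the matrix with rows the unit vectors `e_{c+j}` (`j < k`) followed by the power rows
`(t_r ^ q)_{q < n+k}`, and `Q` the matrix with columns the band columns `(s_{q-i})_q` (`i < k`)
followed by the unit vectors `e_a` (`a < n`). Since every `t_r` is a root of `ψ`, the power rows
annihilate the band columns, so `P * Q` is block triangular and `det P * det Q = det D_c^k * V(t)`,
with `V(t)` the Vandermonde determinant. Listing the positions `q` with `c, …, c+k-1` first makes
`P` block triangular with determinant the generalized Vandermonde determinant `G = det (t_r ^ e_a)`,
whose exponents skip `c, …, c+k-1`; listing `n, …, n+k-1` first makes `Q` block triangular with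
determinant `s_n ^ k`. The two orders differ by a rotation of sign `(-1)^((n-c)k)`. Finally, the
Laplace expansion of `G` along its last `n - c` columns, combined with the factorization
`V(t) = ± V(t|σᶜ) V(t|σ) ∏_{j ∈ σ, i ∉ σ} (t_j - t_i)`, gives
`G = V(t) ∑_σ ∏_{j ∈ σ} t_j ^ (c+k) / ∏_{j ∈ σ, i ∉ σ} (t_j - t_i)`.
-/

open Finset Matrix Equiv

lemma Finset.prod_orderEmbOfFin {α M : Type*} [LinearOrder α] [CommMonoid M] (s : Finset α)
    {k : ℕ} (h : #s = k) (f : α → M) : ∏ i, f (s.orderEmbOfFin h i) = ∏ x ∈ s, f x := by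
  conv_rhs => rw [← s.map_orderEmbOfFin_univ h, prod_map]
  rfl

lemma Finset.prod_prod_compl_sub_ne_zero {ι R : Type*} [Fintype ι] [DecidableEq ι] [CommRing R]
    [IsDomain R] {t : ι → R} (ht : Function.Injective t) (σ : Finset ι) :
    ∏ j ∈ σ, ∏ i ∈ σᶜ, (t j - t i) ≠ 0 := by
  simp only [prod_ne_zero_iff, mem_compl, sub_ne_zero]
  intro j hj i hi hji
  exact hi (ht hji ▸ hj)

lemma Int.cast_units_mul_self {R : Type*} [Ring R] (u : ℤˣ) :
    ((u : ℤ) : R) * (u : ℤ) = 1 := by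
  rw [← Int.cast_mul, Int.units_coe_mul_self, Int.cast_one]

lemma Finset.card_compl_eq_of_card_eq {p m : ℕ} {σ : Finset (Fin (p + m))} (hσ : #σ = m) :
    #σᶜ = p := by
  rw [card_compl, Fintype.card_fin, hσ, Nat.add_sub_cancel]

namespace Matrix

variable {R : Type*} [CommRing R] {p m : ℕ}

def laplaceShuffle (σ : Finset (Fin (p + m))) (hσ : #σ = m) : Perm (Fin (p + m)) :=
  finSumFinEquiv.symm.trans <| (Equiv.sumComm _ _).trans <|
    (Equiv.sumCongr (σ.orderIsoOfFin hσ).toEquiv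
      ((σᶜ.orderIsoOfFin (card_compl_eq_of_card_eq hσ)).toEquiv.trans
        (Equiv.subtypeEquivRight fun _ => mem_compl))).trans (Equiv.sumCompl (· ∈ σ))

def laplaceMask (σ : Finset (Fin (p + m))) (A : Matrix (Fin (p + m)) (Fin (p + m)) R) :
    Matrix (Fin (p + m)) (Fin (p + m)) R :=
  of fun y x => if (y ∈ σ ↔ p ≤ (x : ℕ)) then A y x else 0

section Shuffle

variable {σ : Finset (Fin (p + m))} (hσ : #σ = m)

@[simp] lemma laplaceShuffle_castAdd (i : Fin p) :
    laplaceShuffle σ hσ (Fin.castAdd m i) =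
      σᶜ.orderEmbOfFin (card_compl_eq_of_card_eq hσ) i := by
  simp [laplaceShuffle]

@[simp] lemma laplaceShuffle_natAdd (j : Fin m) :
    laplaceShuffle σ hσ (Fin.natAdd p j) = σ.orderEmbOfFin hσ j := by
  simp [laplaceShuffle]

lemma det_laplaceMask (A : Matrix (Fin (p + m)) (Fin (p + m)) R) :
    (laplaceMask σ A).det = Perm.sign (laplaceShuffle σ hσ) *
      (A.submatrix (σᶜ.orderEmbOfFin (card_compl_eq_of_card_eq hσ)) (Fin.castAdd m)).det *
      (A.submatrix (σ.orderEmbOfFin hσ) (Fin.natAdd p)).det := by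
  have hcompl (i : Fin p) : σᶜ.orderEmbOfFin (card_compl_eq_of_card_eq hσ) i ∉ σ :=
    mem_compl.mp (orderEmbOfFin_mem _ _ i)
  have hblocks : ((laplaceMask σ A).submatrix (laplaceShuffle σ hσ) id).submatrix
      finSumFinEquiv finSumFinEquiv = fromBlocks
        (A.submatrix (σᶜ.orderEmbOfFin (card_compl_eq_of_card_eq hσ)) (Fin.castAdd m)) 0 0
        (A.submatrix (σ.orderEmbOfFin hσ) (Fin.natAdd p)) := by
    ext (i | j) (i' | j') <;> simp [laplaceMask, hcompl, orderEmbOfFin_mem, Fin.is_lt]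
  have hdet := congrArg det hblocks
  rw [det_submatrix_equiv_self, det_permute, det_fromBlocks_zero₂₁] at hdet
  rw [mul_assoc, ← hdet, ← mul_assoc, Int.cast_units_mul_self, one_mul]

end Shuffle

/-- The term of a permutation `π` in `det A` survives in exactly one of the masks, the one with
`σ = π '' {x | p ≤ x}`. -/
lemma sum_prod_laplaceMask (A : Matrix (Fin (p + m)) (Fin (p + m)) R) (π : Perm (Fin (p + m))) :
    ∑ σ : {σ : Finset (Fin (p + m)) // #σ = m}, ∏ x, laplaceMask σ A (π x) x =
      ∏ x, A (π x) x := by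
  have hcard : #{x : Fin (p + m) | p ≤ (x : ℕ)} = m := by
    have := card_filter_add_card_filter_not (s := univ) fun x : Fin (p + m) => (x : ℕ) < p
    simp only [Fin.card_filter_val_lt, not_lt, card_univ, Fintype.card_fin] at this
    omega
  let σπ : {σ : Finset (Fin (p + m)) // #σ = m} :=
    ⟨({x : Fin (p + m) | p ≤ (x : ℕ)} : Finset _).map π.toEmbedding,
      by rw [card_map, hcard]⟩
  have hcond (σ : {σ : Finset (Fin (p + m)) // #σ = m}) :
      (∀ x ∈ univ, (π x ∈ σ.1 ↔ p ≤ (x : ℕ))) ↔ σ = σπ := by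
    rw [Subtype.ext_iff, Finset.ext_iff, π.forall_congr_left]
    simp [σπ]
  simp only [laplaceMask, of_apply, prod_ite_zero, hcond]
  exact Fintype.sum_ite_eq' σπ _

theorem det_eq_sum_laplace (A : Matrix (Fin (p + m)) (Fin (p + m)) R) :
    A.det = ∑ σ : {σ : Finset (Fin (p + m)) // #σ = m}, Perm.sign (laplaceShuffle σ.1 σ.2) *
      (A.submatrix (σ.1ᶜ.orderEmbOfFin (card_compl_eq_of_card_eq σ.2)) (Fin.castAdd m)).det *
      (A.submatrix (σ.1.orderEmbOfFin σ.2) (Fin.natAdd p)).det := by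
  simp_rw [← det_laplaceMask, det_apply', ← sum_prod_laplaceMask A, mul_sum]
  exact sum_comm

theorem det_vandermonde_append (u : Fin p → R) (v : Fin m → R) :
    (vandermonde (Fin.append u v)).det =
      (vandermonde u).det * (vandermonde v).det * ∏ i, ∏ j, (v j - u i) := by
  have hIoi {N : ℕ} (w : Fin N → R) :
      (vandermonde w).det = ∏ i, ∏ j, if i < j then w j - w i else 1 := by
    simp_rw [det_vandermonde, ← prod_filter, filter_lt_eq_Ioi]
  have hlt (i : Fin p) (j : Fin m) : Fin.castAdd m i < Fin.natAdd p j := by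
    simp only [Fin.lt_def, Fin.val_castAdd, Fin.val_natAdd]; omega
  have hnlt (i : Fin p) (j : Fin m) : ¬Fin.natAdd p j < Fin.castAdd m i := by
    simp only [Fin.lt_def, Fin.val_castAdd, Fin.val_natAdd]; omega
  have hcast (i j : Fin p) : Fin.castAdd m i < Fin.castAdd m j ↔ i < j := .rfl
  rw [hIoi, hIoi, hIoi]
  simp only [Fin.prod_univ_add, Fin.append_left, Fin.append_right, prod_mul_distrib, hcast, hnlt,
    hlt, Fin.natAdd_lt_natAdd_iff, ↓reduceIte, prod_const_one, mul_one]
  ring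

theorem det_vandermonde_comp_perm (t : Fin p → R) (π : Perm (Fin p)) :
    (vandermonde (t ∘ π)).det = Perm.sign π * (vandermonde t).det :=
  det_permute π (vandermonde t)

theorem det_vandermonde_eq_sign_laplaceShuffle_mul (t : Fin (p + m) → R)
    {σ : Finset (Fin (p + m))} (hσ : #σ = m) :
    (vandermonde t).det = Perm.sign (laplaceShuffle σ hσ) *
      ((vandermonde (t ∘ σᶜ.orderEmbOfFin (card_compl_eq_of_card_eq hσ))).det *
        (vandermonde (t ∘ σ.orderEmbOfFin hσ)).det *
          ∏ j ∈ σ, ∏ i ∈ σᶜ, (t j - t i)) := by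
  have happend : t ∘ laplaceShuffle σ hσ =
      Fin.append (t ∘ σᶜ.orderEmbOfFin (card_compl_eq_of_card_eq hσ))
        (t ∘ σ.orderEmbOfFin hσ) := by
    funext x
    refine Fin.addCases (fun i => ?_) (fun j => ?_) x <;> simp
  have hcross : ∏ i, ∏ j, ((t ∘ σ.orderEmbOfFin hσ) j -
      (t ∘ σᶜ.orderEmbOfFin (card_compl_eq_of_card_eq hσ)) i) =
        ∏ j ∈ σ, ∏ i ∈ σᶜ, (t j - t i) := by
    rw [prod_comm, ← prod_orderEmbOfFin σ hσ]
    simp_rw [Function.comp_apply, ← prod_orderEmbOfFin σᶜ (card_compl_eq_of_card_eq hσ)]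
  rw [← hcross, ← det_vandermonde_append, ← happend, det_vandermonde_comp_perm, ← mul_assoc,
    Int.cast_units_mul_self, one_mul]

def gapVandermonde {n : ℕ} (c k : ℕ) (t : Fin n → R) :
    Matrix (Fin n) (Fin n) R :=
  of fun r a => t r ^ (if (a : ℕ) < c then (a : ℕ) else a + k)

theorem det_gapVandermonde {K : Type*} [Field K] {c m : ℕ} (k : ℕ) {t : Fin (c + m) → K}
    (ht : Function.Injective t) :
    (gapVandermonde c k t).det = (vandermonde t).det *
      ∑ σ ∈ powersetCard m univ,
        (∏ r ∈ σ, t r ^ (c + k)) * (∏ j ∈ σ, ∏ i ∈ σᶜ, (t j - t i))⁻¹ := by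
  rw [det_eq_sum_laplace, mul_sum,
    sum_subtype (powersetCard m univ) (p := fun σ => #σ = m) (by simp [mem_powersetCard])]
  refine sum_congr rfl fun ⟨σ, hσ⟩ _ => ?_
  have hleft : (gapVandermonde c k t).submatrix (σᶜ.orderEmbOfFin (card_compl_eq_of_card_eq hσ))
      (Fin.castAdd m) = vandermonde (t ∘ σᶜ.orderEmbOfFin (card_compl_eq_of_card_eq hσ)) := by
    ext i i'
    simp [gapVandermonde, vandermonde_apply]
  have hright : (gapVandermonde c k t).submatrix (σ.orderEmbOfFin hσ) (Fin.natAdd c) =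
      of fun j j' =>
        t (σ.orderEmbOfFin hσ j) ^ (c + k) * vandermonde (t ∘ σ.orderEmbOfFin hσ) j j' := by
    ext j j'
    simp only [gapVandermonde, submatrix_apply, of_apply, Fin.val_natAdd, add_lt_iff_neg_left,
      not_lt_zero, ↓reduceIte, vandermonde_apply, Function.comp_apply, ← pow_add]
    ring
  rw [hleft, hright, det_mul_column, prod_orderEmbOfFin σ hσ (fun r => t r ^ (c + k)),
    det_vandermonde_eq_sign_laplaceShuffle_mul t hσ]
  have := prod_prod_compl_sub_ne_zero ht σ
  field_simp

end Matrix

lemma val_finRotate_pow {L : ℕ} (k : ℕ) (y : Fin L) :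
    ((finRotate L ^ k) y : ℕ) = (y + k) % L := by
  obtain _ | L := L
  · exact y.elim0
  induction k with
  | zero => simp [Nat.mod_eq_of_lt y.isLt]
  | succ k ih =>
    rw [pow_succ', Perm.mul_apply, finRotate_apply, Fin.val_add, ih, Fin.val_one', ← Nat.add_mod,
      add_assoc]

namespace Widom

section Positions

variable {n c : ℕ}

def tailRotation (hc : c ≤ n) (k : ℕ) : Perm (Fin (n + k)) :=
  (finSumFinEquiv.trans (finCongr (by omega : c + (n - c + k) = n + k))).permCongr
    (Perm.sumCongr 1 (finRotate (n - c + k) ^ k))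

lemma val_tailRotation (hc : c ≤ n) (k : ℕ) (x : Fin (n + k)) :
    (tailRotation hc k x : ℕ) =
      if (x : ℕ) < c then (x : ℕ) else c + (x - c + k) % (n - c + k) := by
  obtain ⟨y, rfl⟩ :=
    (finSumFinEquiv.trans (finCongr (by omega : c + (n - c + k) = n + k))).surjective x
  rcases y with i | j
  · simp [tailRotation, Equiv.permCongr_apply]
  · simp [tailRotation, Equiv.permCongr_apply, val_finRotate_pow]

lemma sign_tailRotation (hc : c ≤ n) (k : ℕ) :
    Perm.sign (tailRotation hc k) = (-1) ^ ((n - c) * k) := by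
  rw [tailRotation, Perm.sign_permCongr, Perm.sign_sumCongr, map_one, one_mul, map_pow,
    sign_finRotate, ← pow_mul]
  obtain _ | k := k
  · simp
  · rw [show (n - c + (k + 1) - 1) * (k + 1) = (n - c) * (k + 1) + k * (k + 1) by
      rw [Nat.add_sub_assoc (by omega), add_mul]; rfl, pow_add,
      (Nat.even_mul_succ_self k).neg_one_pow, mul_one]

def blockEquiv (n k : ℕ) : Fin k ⊕ Fin n ≃ Fin (n + k) :=
  (Equiv.sumComm _ _).trans finSumFinEquiv

def gapEquiv (hc : c ≤ n) (k : ℕ) : Fin k ⊕ Fin n ≃ Fin (n + k) :=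
  (blockEquiv n k).trans (tailRotation hc k)

variable (hc : c ≤ n) {k : ℕ}

@[simp] lemma val_gapEquiv_inl (j : Fin k) : (gapEquiv hc k (.inl j) : ℕ) = c + j := by
  have hmod : (n + j - c + k) % (n - c + k) = j := by
    rw [show n + j - c + k = j + (n - c + k) by omega, Nat.add_mod_right,
      Nat.mod_eq_of_lt (by omega)]
  simp [gapEquiv, blockEquiv, val_tailRotation, hmod, show ¬n + (j : ℕ) < c by omega]

@[simp] lemma val_gapEquiv_inr (a : Fin n) :
    (gapEquiv hc k (.inr a) : ℕ) = if (a : ℕ) < c then (a : ℕ) else a + k := by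
  simp only [gapEquiv, blockEquiv, Equiv.trans_apply, Equiv.sumComm_apply, Sum.swap_inr,
    finSumFinEquiv_apply_left, val_tailRotation, Fin.val_castAdd]
  split_ifs
  · rfl
  · rw [Nat.mod_eq_of_lt (by omega)]; omega

end Positions

section Band

variable {R : Type*} [CommRing R] (n : ℕ) (s : ℕ → R)

def bandCoeff (z : ℤ) : R := if 0 ≤ z ∧ z ≤ n then s z.toNat else 0

/-- `D_c^k` in the paper. -/
def toeplitzMinor (c k : ℕ) : Matrix (Fin k) (Fin k) R :=
  of fun i j => bandCoeff n s ((c : ℤ) + j - i)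

def bandMatrix (k : ℕ) : Matrix (Fin (n + k)) (Fin k) R :=
  of fun q i => bandCoeff n s ((q : ℤ) - i)

variable {n} {k : ℕ}

def powerMatrix (k : ℕ) (t : Fin n → R) : Matrix (Fin n) (Fin (n + k)) R :=
  of fun r q => t r ^ (q : ℕ)

variable {s} {t : Fin n → R}

lemma powerMatrix_mul_bandMatrix (hroot : ∀ r, ∑ j ∈ range (n + 1), s j * t r ^ j = 0) :
    powerMatrix k t * bandMatrix n s k = 0 := by
  ext r i
  have hsub : (range (n + 1)).map (addLeftEmbedding (i : ℕ)) ⊆ range (n + k) := by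
    intro q
    simp only [mem_map, mem_range, addLeftEmbedding_apply]
    omega
  have hzero : ∀ q ∈ range (n + k), q ∉ (range (n + 1)).map (addLeftEmbedding (i : ℕ)) →
      t r ^ q * bandCoeff n s ((q : ℤ) - i) = 0 := by
    intro q _ hq
    simp only [mem_map, mem_range, addLeftEmbedding_apply, not_exists, not_and] at hq
    simp only [bandCoeff, mul_ite, mul_zero, ite_eq_right_iff]
    intro hband
    exact absurd (hq (q - i) (by omega)) (by omega)
  simp only [mul_apply, powerMatrix, bandMatrix, of_apply, Matrix.zero_apply]
  rw [Fin.sum_univ_eq_sum_range (fun q => t r ^ q * bandCoeff n s ((q : ℤ) - i)),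
    ← sum_subset hsub hzero, sum_map, ← mul_zero (t r ^ (i : ℕ)), ← hroot r, mul_sum]
  refine sum_congr rfl fun j hj => ?_
  have hj' : j ≤ n := Nat.lt_succ_iff.mp (mem_range.mp hj)
  simp only [addLeftEmbedding_apply, pow_add, bandCoeff, Nat.cast_add, add_sub_cancel_left,
    Nat.cast_nonneg, Nat.cast_le, hj', and_self, ↓reduceIte, Int.toNat_natCast]
  ring

end Band

section Factorization

variable {R : Type*} [CommRing R] {n c k : ℕ} {s : ℕ → R} {t : Fin n → R}

def unitPowerMatrix (hc : c ≤ n) (k : ℕ) (t : Fin n → R) :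
    Matrix (Fin k ⊕ Fin n) (Fin (n + k)) R :=
  fromRows ((1 : Matrix (Fin (n + k)) (Fin (n + k)) R).submatrix (gapEquiv hc k ∘ Sum.inl) id)
    (powerMatrix k t)

def bandUnitMatrix (n : ℕ) (s : ℕ → R) (k : ℕ) : Matrix (Fin (n + k)) (Fin k ⊕ Fin n) R :=
  fromCols (bandMatrix n s k)
    ((1 : Matrix (Fin (n + k)) (Fin (n + k)) R).submatrix id (blockEquiv n k ∘ Sum.inr))

theorem det_unitPowerMatrix_mul_bandUnitMatrix (hc : c ≤ n)
    (hroot : ∀ r, ∑ j ∈ range (n + 1), s j * t r ^ j = 0) :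
    (unitPowerMatrix hc k t * bandUnitMatrix n s k).det =
      (toeplitzMinor n s c k).det * (vandermonde t).det := by
  have htoeplitz : (1 : Matrix (Fin (n + k)) (Fin (n + k)) R).submatrix
      (gapEquiv hc k ∘ Sum.inl) id * bandMatrix n s k = (toeplitzMinor n s c k)ᵀ := by
    ext j i
    simp [mul_apply, one_apply, bandMatrix, toeplitzMinor]
  have hvandermonde : powerMatrix k t *
      (1 : Matrix (Fin (n + k)) (Fin (n + k)) R).submatrix id (blockEquiv n k ∘ Sum.inr) =
        vandermonde t := by
    rw [← Equiv.coe_refl, mul_submatrix_one]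
    ext r a
    simp [powerMatrix, blockEquiv, vandermonde_apply]
  rw [unitPowerMatrix, bandUnitMatrix, fromRows_mul_fromCols, htoeplitz, hvandermonde,
    powerMatrix_mul_bandMatrix hroot, det_fromBlocks_zero₂₁, det_transpose]

theorem det_bandUnitMatrix_submatrix_blockEquiv :
    ((bandUnitMatrix n s k).submatrix (blockEquiv n k) id).det = s n ^ k := by
  have hne (j : Fin k) (a : Fin n) : n + (j : ℕ) ≠ a := by omega
  have hblocks : (bandUnitMatrix n s k).submatrix (blockEquiv n k) id =
      fromBlocks ((bandMatrix n s k).submatrix (Fin.natAdd n) id) 0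
        ((bandMatrix n s k).submatrix (Fin.castAdd k) id) 1 := by
    ext (j | a) (i | a') <;> simp [bandUnitMatrix, blockEquiv, one_apply, Fin.ext_iff, hne]
  have htriangular : ((bandMatrix n s k).submatrix (Fin.natAdd n) id).IsUpperTriangular := by
    intro j i hij
    simp only [id, Fin.lt_def] at hij
    simp only [submatrix_apply, bandMatrix, bandCoeff, of_apply, id, Fin.val_natAdd]
    rw [if_neg (by omega)]
  rw [hblocks, det_fromBlocks_zero₁₂, det_one, mul_one, det_of_isUpperTriangular htriangular]
  simp [bandMatrix, bandCoeff]

theorem det_bandUnitMatrix_submatrix_gapEquiv (hc : c ≤ n) :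
    ((bandUnitMatrix n s k).submatrix (gapEquiv hc k) id).det =
      (-1) ^ ((n - c) * k) * s n ^ k := by
  have hpermute : (bandUnitMatrix n s k).submatrix (gapEquiv hc k) id =
      ((bandUnitMatrix n s k).submatrix (blockEquiv n k) id).submatrix
        ((blockEquiv n k).symm.permCongr (tailRotation hc k)) id := by
    ext x y
    simp [gapEquiv, Equiv.permCongr_apply]
  rw [hpermute, det_permute, Perm.sign_permCongr, sign_tailRotation,
    det_bandUnitMatrix_submatrix_blockEquiv]
  simp

theorem det_unitPowerMatrix_submatrix_gapEquiv (hc : c ≤ n) :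
    ((unitPowerMatrix hc k t).submatrix id (gapEquiv hc k)).det = (gapVandermonde c k t).det := by
  have hblocks : (unitPowerMatrix hc k t).submatrix id (gapEquiv hc k) =
      fromBlocks 1 0 ((powerMatrix k t).submatrix id (gapEquiv hc k ∘ Sum.inl))
        (gapVandermonde c k t) := by
    ext (j | r) (j' | a) <;> simp [unitPowerMatrix, one_apply, powerMatrix, gapVandermonde]
  rw [hblocks, det_fromBlocks_zero₁₂, det_one, one_mul]

theorem det_toeplitzMinor_mul_det_vandermonde (hc : c ≤ n)
    (hroot : ∀ r, ∑ j ∈ range (n + 1), s j * t r ^ j = 0) :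
    (toeplitzMinor n s c k).det * (vandermonde t).det =
      (-1) ^ ((n - c) * k) * s n ^ k * (gapVandermonde c k t).det := by
  rw [← det_unitPowerMatrix_mul_bandUnitMatrix hc hroot,
    ← submatrix_id_id (unitPowerMatrix hc k t * bandUnitMatrix n s k),
    ← submatrix_mul_equiv _ _ id (gapEquiv hc k) id, det_mul,
    det_unitPowerMatrix_submatrix_gapEquiv, det_bandUnitMatrix_submatrix_gapEquiv]
  ring

end Factorization

end Widom

theorem widom_determinant_formula_general (n c : ℕ) (hc : c ≤ n) (s : ℕ → ℂ)
    (t : Fin n → ℂ) (ht : Function.Injective t)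
    (hroot : ∀ i, ∑ j ∈ Finset.range (n + 1), s j * t i ^ j = 0)
    (k : ℕ) :
    (Matrix.of fun i j : Fin k =>
        if 0 ≤ (c : ℤ) + j - i ∧ (c : ℤ) + j - i ≤ n then s ((c : ℤ) + j - i).toNat
        else 0).det =
      ∑ σ ∈ Finset.powersetCard (n - c) (Finset.univ : Finset (Fin n)),
        ((∏ i ∈ σ, t i ^ c) * ∏ j ∈ σ, ∏ i ∈ Finset.univ \ σ, (t j - t i)⁻¹) *
          ((-1 : ℂ) ^ (n - c) * s n * ∏ i ∈ σ, t i) ^ k := by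
  obtain ⟨m, rfl⟩ : ∃ m, n = c + m := ⟨n - c, by omega⟩
  have hV : (vandermonde t).det ≠ 0 := det_vandermonde_ne_zero_iff.mpr ht
  have hfactor := Widom.det_toeplitzMinor_mul_det_vandermonde (k := k) hc hroot
  rw [det_gapVandermonde k ht, Nat.add_sub_cancel_left] at hfactor
  change (Widom.toeplitzMinor (c + m) s c k).det = _
  rw [Nat.add_sub_cancel_left, ← mul_left_inj' hV, hfactor, mul_comm (vandermonde t).det,
    ← mul_assoc, mul_sum]
  congr 1
  refine sum_congr rfl fun σ _ => ?_
  simp only [← compl_eq_univ_sdiff, prod_inv_distrib, pow_add, prod_mul_distrib, prod_pow,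
    mul_pow, ← pow_mul]
  ring

/-- Widom's determinant formula.  Let `s_0 = 1, s_1, ..., s_n` be complex numbers with
`s_n ≠ 0`, let `ψ(t) = Σ_{i=0}^n s_i t^i` have `n` distinct roots `t_1, ..., t_n`, and
for `0 ≤ c ≤ n` let `D_c^k` be the leading `k × k` submatrix of the banded Toeplitz
matrix `(s_{j-i})` (with `s_i = 0` for `i < 0` or `i > n`) after deleting its first `c`
columns, i.e. the matrix with `(i, j)` entry `s_{c + j - i}`.  Then for all `k ≥ 1`,
`det D_c^k = Σ_{σ ⊆ [n], |σ| = n-c} C_σ w_σ^k` with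
`w_σ = (-1)^{n-c} s_n Π_{i∈σ} t_i` and
`C_σ = Π_{i∈σ} t_i^c · Π_{j∈σ, i∉σ} (t_j - t_i)⁻¹`. -/
theorem widom_determinant_formula (n c : ℕ) (hc : c ≤ n) (s : ℕ → ℂ) (h0 : s 0 = 1)
    (hn : s n ≠ 0) (t : Fin n → ℂ) (ht : Function.Injective t)
    (hroot : ∀ i, ∑ j ∈ Finset.range (n + 1), s j * t i ^ j = 0)
    (k : ℕ) (hk : 1 ≤ k) :
    (Matrix.of fun i j : Fin k =>
        if 0 ≤ (c : ℤ) + j - i ∧ (c : ℤ) + j - i ≤ n then s ((c : ℤ) + j - i).toNat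
        else 0).det =
      ∑ σ ∈ Finset.powersetCard (n - c) (Finset.univ : Finset (Fin n)),
        ((∏ i ∈ σ, t i ^ c) * ∏ j ∈ σ, ∏ i ∈ Finset.univ \ σ, (t j - t i)⁻¹) *
          ((-1 : ℂ) ^ (n - c) * s n * ∏ i ∈ σ, t i) ^ k :=
  widom_determinant_formula_general n c hc s t ht hroot k
end
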